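/- arXiv:2307.05057 — 7 statements merged into one kernel-verified Lean document; each statement's English description precedes it below -/
import Mathlib

section
/- If M is a static interpreted system (v ∼_a w if and only if L(v)_a = L(w)_a, for all agents a and worlds v, w), then the map Z sending (w,R) in M ⊙ 𝐑 to (w,(R,L(w))) in M ⊗ 𝐔(𝐑) is a collective bisimulation; hence M ⊙ 𝐑 and M ⊗ 𝐔(𝐑) are collectively bisimilar. -/
namespace Stmt6

variable {A W P : Type}

/-- States of `M ⊙ 𝐑`: pairs of a world and a communication graph. -/
def UpState (W : Type) (A : Type) (CG : Set (A → A → Prop)) := W × {R // R ∈ CG}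

/-- Relation of `M ⊙ 𝐑`: `(w,R) ∼̇_a (w',R')` iff `Ra = R'a` and `w ∼_{Ra} w'`. -/
def upRel (sim : A → W → W → Prop) (CG : Set (A → A → Prop)) (a : A)
    (x y : UpState W A CG) : Prop :=
  ({b | x.2.1 b a} = {b | y.2.1 b a}) ∧ ∀ b, x.2.1 b a → sim b x.1 y.1

/-- States of `M ⊗ 𝐔(𝐑)`: pairs `(v,(R,Q))` such that `v` satisfies the
precondition `δ_Q` of action `(R,Q)`, i.e. `L v = Q`. -/
def ExState (W : Type) (A : Type) (P : Type) (L : W → Set P)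
    (CG : Set (A → A → Prop)) :=
  {x : W × ({R // R ∈ CG} × Set P) // L x.1 = x.2.2}

/-- Relation of `M ⊗ 𝐔(𝐑)`: `(v,(R,Q)) ∼_a (v',(R',Q'))` iff `v ∼_a v'`,
`Ra = R'a` and `Q_{Ra} = Q'_{R'a}`. -/
def exRel (sim : A → W → W → Prop) (owner : P → A) (L : W → Set P)
    (CG : Set (A → A → Prop)) (a : A) (x y : ExState W A P L CG) : Prop :=
  sim a x.1.1 y.1.1 ∧
  ({b | x.1.2.1.1 b a} = {b | y.1.2.1.1 b a}) ∧
  {p ∈ x.1.2.2 | x.1.2.1.1 (owner p) a} = {p ∈ y.1.2.2 | y.1.2.1.1 (owner p) a}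

/-- The map `Z : (w,R) ↦ (w,(R,L(w)))`. -/
def Zmap (L : W → Set P) (CG : Set (A → A → Prop)) (x : UpState W A CG) :
    ExState W A P L CG := ⟨(x.1, (x.2, L x.1)), rfl⟩

theorem Set.sep_eq_sep_iff {α : Type*} {s t : Set α} {q : α → Prop} :
    {p ∈ s | q p} = {p ∈ t | q p} ↔ ∀ p, q p → (p ∈ s ↔ p ∈ t) := by
  simp only [Set.ext_iff, Set.mem_ofPred_eq]
  exact forall_congr' fun p => by tauto

/-- `M` is a static interpreted system. -/
def IsStatic (owner : P → A) (sim : A → W → W → Prop) (L : W → Set P) : Prop :=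
  ∀ a v w, sim a v w ↔ ∀ p, owner p = a → (p ∈ L v ↔ p ∈ L w)

/-- This is how the precondition `Q_{Ra} = Q'_{R'a}` of `𝐔(𝐑)` encodes the relation `∼_{Ra}`
of `M ⊙ 𝐑`. -/
theorem IsStatic.sep_owner_eq_iff {owner : P → A} {sim : A → W → W → Prop} {L : W → Set P}
    (h : IsStatic owner sim L) (S : Set A) (v w : W) :
    {p ∈ L v | owner p ∈ S} = {p ∈ L w | owner p ∈ S} ↔ ∀ b ∈ S, sim b v w := by
  rw [Set.sep_eq_sep_iff]
  refine ⟨fun hvw b hb => (h b v w).mpr fun p hp => hvw p (hp ▸ hb), fun hvw p hp => ?_⟩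
  exact (h _ v w).mp (hvw _ hp) p rfl

section Bisimulation

variable {owner : P → A} {sim : A → W → W → Prop} {L : W → Set P} {CG : Set (A → A → Prop)}

theorem Zmap_fst_snd (z : ExState W A P L CG) : Zmap L CG (z.1.1, z.1.2.1) = z := by
  obtain ⟨⟨v, R, Q⟩, hQ : L v = Q⟩ := z
  subst hQ
  rfl

theorem exRel_Zmap_of_upRel (his : IsStatic owner sim L) (hrefl : ∀ R ∈ CG, ∀ b, R b b)
    {a : A} {x y : UpState W A CG} (hxy : upRel sim CG a x y) :
    exRel sim owner L CG a (Zmap L CG x) (Zmap L CG y) := by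
  obtain ⟨hR, hsim⟩ := hxy
  refine ⟨hsim a (hrefl _ x.2.2 a), hR, ?_⟩
  change {p ∈ L x.1 | owner p ∈ {b | x.2.1 b a}} = {p ∈ L y.1 | owner p ∈ {b | y.2.1 b a}}
  rw [← hR, his.sep_owner_eq_iff]
  exact hsim

theorem upRel_of_exRel_Zmap (his : IsStatic owner sim L) {a : A} {x : UpState W A CG}
    {z : ExState W A P L CG} (hxz : exRel sim owner L CG a (Zmap L CG x) z) :
    upRel sim CG a x (z.1.1, z.1.2.1) := by
  obtain ⟨-, hR, hQ⟩ := hxz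
  change {b | x.2.1 b a} = {b | z.1.2.1.1 b a} at hR
  refine ⟨hR, ?_⟩
  change {p ∈ L x.1 | owner p ∈ {b | x.2.1 b a}} = {p ∈ z.1.2.2 | owner p ∈ {b | z.1.2.1.1 b a}}
    at hQ
  rwa [← z.2, ← hR, his.sep_owner_eq_iff] at hQ

end Bisimulation

theorem induced_action_model_bisimulation_general (owner : P → A)
    (sim : A → W → W → Prop) (L : W → Set P)
    (CG : Set (A → A → Prop)) (hrefl : ∀ R ∈ CG, ∀ b, R b b)
    (his : ∀ a v w, sim a v w ↔ ∀ p, owner p = a → (p ∈ L v ↔ p ∈ L w)) :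
    -- atoms
    (∀ x : UpState W A CG, L x.1 = L (Zmap L CG x).1.1) ∧
    -- forth
    (∀ B : Set A, B.Nonempty → ∀ x y : UpState W A CG,
      (∀ a ∈ B, upRel sim CG a x y) →
      (∀ a ∈ B, exRel sim owner L CG a (Zmap L CG x) (Zmap L CG y))) ∧
    -- back
    (∀ B : Set A, B.Nonempty → ∀ (x : UpState W A CG) (z : ExState W A P L CG),
      (∀ a ∈ B, exRel sim owner L CG a (Zmap L CG x) z) →
      ∃ y : UpState W A CG, (∀ a ∈ B, upRel sim CG a x y) ∧ z = Zmap L CG y) := by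
  refine ⟨fun x => rfl, ?_, ?_⟩
  · intro B _ x y hxy a ha
    exact exRel_Zmap_of_upRel his hrefl (hxy a ha)
  · intro B _ x z hxz
    exact ⟨(z.1.1, z.1.2.1), fun a ha => upRel_of_exRel_Zmap his (hxz a ha),
      (Zmap_fst_snd z).symm⟩

/-- If `M` is a static interpreted system (`v ∼_a w` iff `L(v)_a = L(w)_a`), then
`Z : (w,R) ↦ (w,(R,L(w)))` is a collective bisimulation between `M ⊙ 𝐑` and
`M ⊗ 𝐔(𝐑)` (atoms, forth, and back for all nonempty groups `B ⊆ A`); hence the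
two models are collectively bisimilar. -/
theorem induced_action_model_bisimulation (owner : P → A)
    (sim : A → W → W → Prop) (L : W → Set P)
    (hsim : ∀ a, Equivalence (sim a))
    (CG : Set (A → A → Prop)) (hrefl : ∀ R ∈ CG, ∀ b, R b b)
    (his : ∀ a v w, sim a v w ↔ ∀ p, owner p = a → (p ∈ L v ↔ p ∈ L w)) :
    -- atoms
    (∀ x : UpState W A CG, L x.1 = L (Zmap L CG x).1.1) ∧
    -- forth
    (∀ B : Set A, B.Nonempty → ∀ x y : UpState W A CG,
      (∀ a ∈ B, upRel sim CG a x y) →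
      (∀ a ∈ B, exRel sim owner L CG a (Zmap L CG x) (Zmap L CG y))) ∧
    -- back
    (∀ B : Set A, B.Nonempty → ∀ (x : UpState W A CG) (z : ExState W A P L CG),
      (∀ a ∈ B, exRel sim owner L CG a (Zmap L CG x) z) →
      ∃ y : UpState W A CG, (∀ a ∈ B, upRel sim CG a x y) ∧ z = Zmap L CG y) :=
  induced_action_model_bisimulation_general owner sim L CG hrefl his

end Stmt6
end

section
/- Define a circular ab-chain as an epistemic model on worlds 0,…,2n−1 (n ≥ 2) where 2i ∼_a 2i+1 and 2i ∼_b 2i−1 (indices modulo 2n), with no other nontrivial indistinguishabilities. If M is a circular ab-chain, then M ⊙ IS is a circular ab-chain on 6n worlds, where IS = {R^{ab}, R^{ba}, U} is the immediate-snapshot communication pattern for agents {a,b}. -/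
/-! Outside its solo pattern (`R^{ab}` for `a`, `R^{ba}` for `b`) an agent also hears the other
one, so in `M ⊙ IS` it only confuses copies of worlds that both agents confuse in `M`; for `n ≥ 2`
the `a`- and `b`-neighbours of a world differ, so these are copies of one world. Inside its solo
pattern it confuses what it confused in `M`. Hence each agent's relation on `M ⊙ IS` is again
"equal or partner" for an involutive partner map, and placing the three copies of world `k` at
`3k - 2, 3k - 1, 3k` (in an order depending on the parity of `k`) turns these partner maps into
those of the chain on `6n` worlds. The placement is injective because its residues mod 2 and mod 3
recover the parity of `k` and the pattern. -/

namespace Stmt7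

/-- The two agents: `false` is agent `a`, `true` is agent `b`. -/
abbrev Agent := Bool

/-- The three communication graphs of the immediate snapshot pattern
`IS = {R^{ab}, R^{ba}, U}`. -/
inductive Pat : Type
  | Rab | Rba | U

/-- `recv R c` is the set `Rc = {d | (d,c) ∈ R}` of agents whose message `c`
receives: `R^{ab}a = {a}`, `R^{ab}b = {a,b}`, `R^{ba}a = {a,b}`, `R^{ba}b = {b}`,
`Ua = Ub = {a,b}`. -/
def recv : Pat → Agent → Set Agent
  | Pat.Rab, false => {false}
  | Pat.Rab, true => Set.univ
  | Pat.Rba, false => Set.univ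
  | Pat.Rba, true => {true}
  | Pat.U, _ => Set.univ

/-- The cyclic neighbour of world `k` for agent `c` in a circular `ab`-chain on
`2m` worlds: `2i ∼_a 2i+1` and `2i ∼_b 2i−1` (mod `2m`). -/
noncomputable def partner (m : ℕ) (c : Agent) (k : ZMod (2 * m)) : ZMod (2 * m) :=
  if Even k.val ↔ c = false then k + 1 else k - 1

/-- The indistinguishability relation of a circular `ab`-chain on `2m` worlds. -/
noncomputable def chainRel (m : ℕ) (c : Agent) (u v : ZMod (2 * m)) : Prop :=
  v = u ∨ v = partner m c u ∨ u = partner m c v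

/-- The relation of `M ⊙ IS`:
`(w,R) ∼̇_c (w',R')` iff `Rc = R'c` and `w ∼_{Rc} w'`. -/
noncomputable def updRel {α : Type} (sim : Agent → α → α → Prop) (c : Agent)
    (x y : α × Pat) : Prop :=
  recv x.2 c = recv y.2 c ∧ ∀ d ∈ recv x.2 c, sim d x.1 y.1

deriving instance DecidableEq for Pat

instance : Fintype Pat := ⟨{Pat.Rab, Pat.Rba, Pat.U}, fun R => by cases R <;> decide⟩

lemma zmod_two_eq_zero_or_one (p : ZMod 2) : p = 0 ∨ p = 1 := by revert p; decide

section Chain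

variable {m : ℕ}

lemma two_ne_zero_of_two_le (hm : 2 ≤ m) : (2 : ZMod (2 * m)) ≠ 0 := by
  intro h
  have := Nat.le_of_dvd two_pos ((ZMod.natCast_eq_zero_iff 2 (2 * m)).1 (mod_cast h))
  omega

def parity (m : ℕ) : ZMod (2 * m) →+* ZMod 2 := ZMod.castHom (dvd_mul_right 2 m) (ZMod 2)

lemma even_val_iff_parity_eq_zero [NeZero m] (k : ZMod (2 * m)) :
    Even k.val ↔ parity m k = 0 := by
  rw [parity, ZMod.castHom_apply, ← ZMod.natCast_val, ZMod.natCast_eq_zero_iff_even]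

lemma partner_eq [NeZero m] (c : Agent) (k : ZMod (2 * m)) :
    partner m c k = if parity m k = 0 ↔ c = false then k + 1 else k - 1 := by
  simp only [partner, even_val_iff_parity_eq_zero]

lemma partner_partner [NeZero m] (c : Agent) (k : ZMod (2 * m)) :
    partner m c (partner m c k) = k := by
  rcases zmod_two_eq_zero_or_one (parity m k) with hp | hp <;> cases c <;>
    simp [partner_eq, hp, map_add, map_sub, show (1 + 1 : ZMod 2) = 0 from rfl]

lemma chainRel_iff [NeZero m] {c : Agent} {u v : ZMod (2 * m)} :
    chainRel m c u v ↔ v = u ∨ v = partner m c u := by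
  rw [chainRel]
  constructor
  · rintro (h | h | rfl)
    exacts [.inl h, .inr h, .inr (partner_partner c v).symm]
  · rintro (h | h)
    exacts [.inl h, .inr (.inl h)]

lemma partner_false_ne_partner_true (hm : (2 : ZMod (2 * m)) ≠ 0) (k : ZMod (2 * m)) :
    partner m false k ≠ partner m true k := by
  unfold partner
  have h : k + 1 ≠ k - 1 := fun h => hm (by linear_combination h)
  split_ifs <;> simp_all [eq_comm]

lemma eq_of_chainRel_false_of_chainRel_true [NeZero m] (hm : (2 : ZMod (2 * m)) ≠ 0)
    {u v : ZMod (2 * m)} (ha : chainRel m false u v) (hb : chainRel m true u v) : v = u := by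
  rw [chainRel_iff] at ha hb
  rcases ha with ha | ha
  · exact ha
  rcases hb with hb | hb
  · exact hb
  exact absurd (ha.symm.trans hb) (partner_false_ne_partner_true hm u)

end Chain

def solo : Agent → Pat
  | false => Pat.Rab
  | true => Pat.Rba

lemma recv_eq (R : Pat) (c : Agent) : recv R c = if R = solo c then {c} else Set.univ := by
  cases R <;> cases c <;> rfl

lemma singleton_ne_univ (c : Agent) : ({c} : Set Agent) ≠ Set.univ := by
  cases c <;> simp [Set.ext_iff]

lemma updRel_iff {α : Type} {sim : Agent → α → α → Prop} (hrefl : ∀ c u, sim c u u)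
    (hsep : ∀ u v, (∀ d, sim d u v) → u = v) (c : Agent) (x y : α × Pat) :
    updRel sim c x y ↔
      x.2 = solo c ∧ y.2 = solo c ∧ sim c x.1 y.1 ∨ x.2 ≠ solo c ∧ y.2 ≠ solo c ∧ x.1 = y.1 := by
  have := singleton_ne_univ c
  rw [updRel, recv_eq, recv_eq]
  by_cases hx : x.2 = solo c <;> by_cases hy : y.2 = solo c <;>
    simp only [hx, hy, if_true, if_false, Set.mem_singleton_iff, forall_eq, Set.mem_univ,
      forall_const, true_and, ne_eq, not_true_eq_false, not_false_eq_true, false_and, and_false,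
      or_false, false_or, this, this.symm]
  exact ⟨hsep _ _, fun h d => h ▸ hrefl d x.1⟩

noncomputable def updPartner (n : ℕ) : Agent → ZMod (2 * n) × Pat → ZMod (2 * n) × Pat
  | false, (k, Pat.Rab) => (partner n false k, Pat.Rab)
  | false, (k, Pat.Rba) => (k, Pat.U)
  | false, (k, Pat.U) => (k, Pat.Rba)
  | true, (k, Pat.Rba) => (partner n true k, Pat.Rba)
  | true, (k, Pat.Rab) => (k, Pat.U)
  | true, (k, Pat.U) => (k, Pat.Rab)

lemma updRel_chainRel_iff {n : ℕ} [NeZero n] (hn : (2 : ZMod (2 * n)) ≠ 0) (c : Agent)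
    (x y : ZMod (2 * n) × Pat) :
    updRel (chainRel n) c x y ↔ y = x ∨ y = updPartner n c x := by
  rw [updRel_iff (sim := chainRel n) (fun _ _ => chainRel_iff.2 (.inl rfl))
    (fun _ _ h => (eq_of_chainRel_false_of_chainRel_true hn (h false) (h true)).symm), chainRel_iff]
  obtain ⟨k, R⟩ := x
  obtain ⟨k', R'⟩ := y
  cases c <;> cases R <;> cases R' <;> simp [solo, updPartner, eq_comm]

section Embedding

variable {n : ℕ}

def triple (n : ℕ) : ZMod (2 * n) →+ ZMod (2 * (3 * n)) :=
  ZMod.lift _ ⟨3 • Int.castAddHom _, by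
    have h := ZMod.natCast_self (2 * (3 * n))
    push_cast at h
    simp only [AddMonoidHom.smul_apply, Int.coe_castAddHom, nsmul_eq_mul]
    push_cast
    linear_combination h⟩

lemma triple_intCast (z : ℤ) : triple n z = 3 * z := by
  simp [triple, ZMod.lift_coe]

lemma triple_one : triple n 1 = 3 := by
  simpa using triple_intCast (n := n) 1

lemma triple_injective : Function.Injective (triple n) := by
  refine (injective_iff_map_eq_zero _).2 fun k hk => ?_
  obtain ⟨z, rfl⟩ := ZMod.intCast_surjective k
  rw [triple_intCast, ← Int.cast_ofNat, ← Int.cast_mul, ZMod.intCast_zmod_eq_zero_iff_dvd] at hk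
  rw [ZMod.intCast_zmod_eq_zero_iff_dvd]
  rw [show ((2 * (3 * n) : ℕ) : ℤ) = 3 * (2 * n : ℕ) by push_cast; ring] at hk
  exact (mul_dvd_mul_iff_left three_ne_zero).1 hk

lemma parity_triple (k : ZMod (2 * n)) : parity (3 * n) (triple n k) = parity n k := by
  obtain ⟨z, rfl⟩ := ZMod.intCast_surjective k
  rw [triple_intCast, map_mul, map_intCast, map_intCast, map_ofNat,
    show (3 : ZMod 2) = 1 from rfl, one_mul]

def modThree (n : ℕ) : ZMod (2 * (3 * n)) →+* ZMod 3 :=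
  ZMod.castHom ((dvd_mul_right 3 n).mul_left 2) (ZMod 3)

lemma modThree_triple (k : ZMod (2 * n)) : modThree n (triple n k) = 0 := by
  obtain ⟨z, rfl⟩ := ZMod.intCast_surjective k
  rw [triple_intCast, map_mul, map_ofNat, show (3 : ZMod 3) = 0 from rfl, zero_mul]

/-- The copies of world `k` sit at `3k + offset (parity k) R`: in the order `Rba, U, Rab` for
even `k` and `Rab, U, Rba` for odd `k`. -/
def offset (p : ZMod 2) : Pat → ℤ
  | Pat.Rab => if p = 0 then 0 else -2
  | Pat.U => -1
  | Pat.Rba => if p = 0 then -2 else 0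

def embed (n : ℕ) (x : ZMod (2 * n) × Pat) : ZMod (2 * (3 * n)) :=
  triple n x.1 + offset (parity n x.1) x.2

lemma embed_updPartner [NeZero n] (c : Agent) (x : ZMod (2 * n) × Pat) :
    embed n (updPartner n c x) = partner (3 * n) c (embed n x) := by
  obtain ⟨k, R⟩ := x
  rcases zmod_two_eq_zero_or_one (parity n k) with hp | hp <;> cases c <;> cases R <;>
    simp [embed, updPartner, partner_eq, offset, hp, map_add, map_sub, parity_triple, triple_one,
      map_ofNat, show (1 + 1 : ZMod 2) = 0 from rfl, show (2 : ZMod 2) = 0 from rfl] <;>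
    ring

lemma offset_injective : ∀ (p p' : ZMod 2) (R R' : Pat),
    p + (offset p R : ZMod 2) = p' + offset p' R' → (offset p R : ZMod 3) = offset p' R' →
      p = p' ∧ R = R' := by
  decide

lemma embed_injective : Function.Injective (embed n) := by
  rintro ⟨k, R⟩ ⟨k', R'⟩ h
  have h2 := congrArg (parity (3 * n)) h
  have h3 := congrArg (modThree n) h
  simp only [embed, map_add, map_intCast, parity_triple, modThree_triple, zero_add] at h2 h3
  obtain ⟨hp, rfl⟩ := offset_injective _ _ _ _ h2 h3
  rw [embed, embed, hp, add_left_inj] at h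
  exact Prod.ext (triple_injective h) rfl

end Embedding

noncomputable def embedEquiv (n : ℕ) [NeZero n] : ZMod (2 * n) × Pat ≃ ZMod (2 * (3 * n)) :=
  Equiv.ofBijective (embed n) <| (Fintype.bijective_iff_injective_and_card _).2
    ⟨embed_injective, by
      rw [Fintype.card_prod, ZMod.card, ZMod.card, show Fintype.card Pat = 3 from rfl]
      ring⟩

/-- If `M` is a circular `ab`-chain on `2n` worlds (`n ≥ 2`), then `M ⊙ IS` is
again a circular `ab`-chain, on `6n` worlds. -/
theorem chain_update_is_chain (n : ℕ) (hn : 2 ≤ n) :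
    ∃ e : (ZMod (2 * n) × Pat) ≃ ZMod (2 * (3 * n)),
      ∀ (c : Agent) (x y : ZMod (2 * n) × Pat),
        updRel (chainRel n) c x y ↔ chainRel (3 * n) c (e x) (e y) := by
  have : NeZero n := ⟨by omega⟩
  refine ⟨embedEquiv n, fun c x y => ?_⟩
  rw [updRel_chainRel_iff (two_ne_zero_of_two_le hn), chainRel_iff, embedEquiv,
    Equiv.ofBijective_apply, Equiv.ofBijective_apply, ← embed_updPartner,
    embed_injective.eq_iff, embed_injective.eq_iff]

end Stmt7
end

section
/- For all n ∈ ℕ, the model Sq ⊙ IS^n (the square model updated n times with the immediate snapshot pattern) is a circular ab-chain, consisting of 4·3^n worlds arranged in a cycle with alternating a-edges and b-edges. -/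
namespace Stmt8

/-- The two agents: `false` is agent `a`, `true` is agent `b`. -/
abbrev Agent := Bool

/-- The three communication graphs of `IS = {R^{ab}, R^{ba}, U}`. -/
inductive Pat : Type
  | Rab | Rba | U

/-- `recv R c` is `Rc = {d | (d,c) ∈ R}`. -/
def recv : Pat → Agent → Set Agent
  | Pat.Rab, false => {false}
  | Pat.Rab, true => Set.univ
  | Pat.Rba, false => Set.univ
  | Pat.Rba, true => {true}
  | Pat.U, _ => Set.univ

/-- Worlds of `Sq ⊙ IS^n`: the four valuations of `{p_a,p_b}` paired with `n`
communication graphs. -/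
def WIter : ℕ → Type
  | 0 => Bool × Bool
  | n + 1 => WIter n × Pat

/-- Relations of `Sq ⊙ IS^n`: in `Sq`, `a` knows `p_a` and `b` knows `p_b`; the
update is `(w,R) ∼̇_c (w',R')` iff `Rc = R'c` and `w ∼_{Rc} w'`. -/
def simIter : (n : ℕ) → Agent → WIter n → WIter n → Prop
  | 0, c, w, w' => if c then w.2 = w'.2 else w.1 = w'.1
  | n + 1, c, x, y => recv x.2 c = recv y.2 c ∧ ∀ d ∈ recv x.2 c, simIter n d x.1 y.1

/-- Cyclic neighbour of world `k` for agent `c` in the circular `ab`-chain on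
`2m` worlds (`2i ∼_a 2i+1`, `2i ∼_b 2i−1` mod `2m`). -/
noncomputable def partner (m : ℕ) (c : Agent) (k : ZMod (2 * m)) : ZMod (2 * m) :=
  if Even k.val ↔ c = false then k + 1 else k - 1

/-- The relation of the circular `ab`-chain on `2m` worlds. -/
noncomputable def chainRel (m : ℕ) (c : Agent) (u v : ZMod (2 * m)) : Prop :=
  v = u ∨ v = partner m c u ∨ u = partner m c v

/-!
Under the update, a world `w` of a circular `ab`-chain splits into three copies
`(w, R^{ab})`, `(w, U)`, `(w, R^{ba})`. Agent `a` hears only itself under `R^{ab}`, so the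
`R^{ab}`-copies inherit exactly the `a`-edges of the chain; symmetrically the `R^{ba}`-copies
inherit the `b`-edges. Under the other graphs an agent hears both agents, and two chain worlds
that are both `a`- and `b`-related are equal, so the only remaining edges are
`(w, R^{ab}) ∼_b (w, U) ∼_a (w, R^{ba})`. Hence replacing world `k` of the chain by the block of
positions `3k, 3k+1, 3k+2` yields a circular chain three times as long, and `Sq` itself is the
chain on four worlds.
-/

section Chain

variable {m : ℕ}

theorem even_val_add_one (hm : 0 < m) (k : ZMod (2 * m)) : Even (k + 1).val ↔ ¬Even k.val := by
  have : Fact (1 < 2 * m) := ⟨by omega⟩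
  rw [ZMod.val_add, ZMod.val_one, Nat.even_iff, Nat.mod_mod_of_dvd _ (dvd_mul_right 2 m),
    ← Nat.even_iff, Nat.even_add_one]

theorem even_val_sub_one (hm : 0 < m) (k : ZMod (2 * m)) : Even (k - 1).val ↔ ¬Even k.val := by
  rw [← not_iff_not, not_not, ← even_val_add_one hm, sub_add_cancel]

theorem partner_partner (hm : 0 < m) (c : Agent) (k : ZMod (2 * m)) :
    partner m c (partner m c k) = k := by
  by_cases h : Even k.val <;> cases c <;>
    simp [partner, h, even_val_add_one hm, even_val_sub_one hm]

theorem ZMod.two_ne_zero_of_two_lt {n : ℕ} (hn : 2 < n) : (2 : ZMod n) ≠ 0 := by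
  have := (ZMod.natCast_eq_zero_iff 2 n).not.2 (Nat.not_dvd_of_pos_of_lt two_pos hn)
  exact_mod_cast this

theorem partner_false_ne_partner_true (hm : 2 ≤ m) (k : ZMod (2 * m)) :
    partner m false k ≠ partner m true k := by
  intro heq
  apply ZMod.two_ne_zero_of_two_lt (n := 2 * m) (by omega)
  by_cases h : Even k.val <;> simp [partner, h] at heq
  · linear_combination heq
  · linear_combination -heq

theorem chainRel_iff (hm : 0 < m) (c : Agent) (u v : ZMod (2 * m)) :
    chainRel m c u v ↔ v = u ∨ v = partner m c u := by
  refine ⟨?_, fun h => h.elim Or.inl (Or.inr ∘ Or.inl)⟩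
  rintro (h | h | h)
  · exact .inl h
  · exact .inr h
  · exact .inr (by rw [h, partner_partner hm])

theorem chainRel_false_and_true_iff (hm : 2 ≤ m) (u v : ZMod (2 * m)) :
    chainRel m false u v ∧ chainRel m true u v ↔ v = u := by
  rw [chainRel_iff (by omega), chainRel_iff (by omega)]
  refine ⟨?_, fun h => ⟨.inl h, .inl h⟩⟩
  rintro ⟨h | ha, h | hb⟩ <;> try exact h
  exact absurd (ha.symm.trans hb) (partner_false_ne_partner_true hm u)

end Chain

deriving instance DecidableEq for Pat

instance : Fintype Pat := Fintype.ofList [.Rab, .Rba, .U] (by intro P; cases P <;> simp)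

/-- The block of world `k` lists its copies as `R^{ba}, U, R^{ab}` when `k` is even and in the
reverse order when `k` is odd: then the `R^{ab}`-copies of `k` and of its `a`-partner, and the
`R^{ba}`-copies of `k` and of its `b`-partner, sit next to each other. -/
def blockOffset : Bool → Pat → ℕ
  | true, .Rba => 0
  | _, .U => 1
  | true, .Rab => 2
  | false, .Rab => 0
  | false, .Rba => 2

def blockPos (m : ℕ) (x : ZMod (2 * m) × Pat) : ZMod (2 * (3 * m)) :=
  (3 * x.1.val + blockOffset (decide (Even x.1.val)) x.2 : ℕ)

noncomputable def updatePartner (m : ℕ) : Agent → ZMod (2 * m) × Pat → ZMod (2 * m) × Pat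
  | false, (k, .Rab) => (partner m false k, .Rab)
  | false, (k, .U) => (k, .Rba)
  | false, (k, .Rba) => (k, .U)
  | true, (k, .Rab) => (k, .U)
  | true, (k, .U) => (k, .Rab)
  | true, (k, .Rba) => (partner m true k, .Rba)

section BlockPos

variable {m : ℕ}

theorem blockOffset_lt (b : Bool) (P : Pat) : blockOffset b P < 3 := by
  cases b <;> cases P <;> decide

theorem blockOffset_injective (b : Bool) : Function.Injective (blockOffset b) := by
  cases b <;> decide

theorem val_blockPos (hm : 0 < m) (k : ZMod (2 * m)) (P : Pat) :
    (blockPos m (k, P)).val = 3 * k.val + blockOffset (decide (Even k.val)) P := by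
  have : NeZero (2 * m) := ⟨by omega⟩
  have := k.val_lt
  have := blockOffset_lt (decide (Even k.val)) P
  exact ZMod.val_natCast_of_lt (by dsimp only; omega)

theorem blockPos_injective (hm : 0 < m) : Function.Injective (blockPos m) := by
  have : NeZero (2 * m) := ⟨by omega⟩
  rintro ⟨k, P⟩ ⟨k', P'⟩ h
  have hval := congrArg ZMod.val h
  rw [val_blockPos hm, val_blockPos hm] at hval
  have := blockOffset_lt (decide (Even k.val)) P
  have := blockOffset_lt (decide (Even k'.val)) P'
  obtain rfl : k = k' := ZMod.val_injective _ (by omega)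
  obtain rfl : P = P' := blockOffset_injective (decide (Even k.val)) (by omega)
  rfl

theorem blockPos_bijective (hm : 0 < m) : Function.Bijective (blockPos m) := by
  have : NeZero (2 * m) := ⟨by omega⟩
  have : NeZero (2 * (3 * m)) := ⟨by omega⟩
  refine (Fintype.bijective_iff_injective_and_card _).2 ⟨blockPos_injective hm, ?_⟩
  simp only [Fintype.card_prod, ZMod.card, show Fintype.card Pat = 3 from rfl]
  ring

theorem even_val_blockPos (hm : 0 < m) (k : ZMod (2 * m)) (P : Pat) :
    Even (blockPos m (k, P)).val ↔ (Even k.val ↔ P ≠ .U) := by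
  rw [val_blockPos hm]
  by_cases h : Even k.val <;> cases P <;> simp [h, blockOffset, parity_simps]

theorem natCast_val_add_one_mul_three (hm : 0 < m) (k : ZMod (2 * m)) :
    ((k + 1).val : ZMod (2 * (3 * m))) * 3 = (k.val : ZMod (2 * (3 * m))) * 3 + 3 := by
  have : NeZero (2 * m) := ⟨by omega⟩
  have : Fact (1 < 2 * m) := ⟨by omega⟩
  have key : (((k.val + 1) % (2 * m) * 3 : ℕ) : ZMod (2 * (3 * m))) = ((k.val + 1) * 3 : ℕ) := by
    rw [← Nat.mul_mod_mul_right, show 2 * m * 3 = 2 * (3 * m) by ring, ZMod.natCast_mod]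
  rw [ZMod.val_add, ZMod.val_one]
  push_cast at key ⊢
  linear_combination key

theorem natCast_val_sub_one_mul_three (hm : 0 < m) (k : ZMod (2 * m)) :
    ((k - 1).val : ZMod (2 * (3 * m))) * 3 = (k.val : ZMod (2 * (3 * m))) * 3 - 3 := by
  rw [eq_sub_iff_add_eq, ← natCast_val_add_one_mul_three hm, sub_add_cancel]

theorem partner_blockPos (hm : 0 < m) (c : Agent) (x : ZMod (2 * m) × Pat) :
    partner (3 * m) c (blockPos m x) = blockPos m (updatePartner m c x) := by
  obtain ⟨k, P⟩ := x
  simp only [partner, even_val_blockPos hm]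
  by_cases h : Even k.val <;> cases c <;> cases P <;>
    simp only [h, ne_eq, reduceCtorEq, not_false_eq_true, not_true_eq_false, Bool.true_eq_false,
      iff_false, iff_true, ↓reduceIte, updatePartner, partner, blockPos, blockOffset,
      even_val_add_one hm, even_val_sub_one hm, decide_true, decide_false, Nat.cast_add,
      Nat.cast_mul, Nat.cast_ofNat, mul_comm 3, natCast_val_add_one_mul_three hm,
      natCast_val_sub_one_mul_three hm] <;>
    push_cast <;> ring

theorem chainRel_blockPos_iff (hm : 0 < m) (c : Agent) (x y : ZMod (2 * m) × Pat) :
    chainRel (3 * m) c (blockPos m x) (blockPos m y) ↔ y = x ∨ y = updatePartner m c x := by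
  rw [chainRel_iff (by omega), partner_blockPos hm, (blockPos_injective hm).eq_iff,
    (blockPos_injective hm).eq_iff]

end BlockPos

def update {W : Type*} (sim : Agent → W → W → Prop) (c : Agent) (x y : W × Pat) : Prop :=
  recv x.2 c = recv y.2 c ∧ ∀ d ∈ recv x.2 c, sim d x.1 y.1

def IsCircularChain {W : Type*} (m : ℕ) (sim : Agent → W → W → Prop) : Prop :=
  ∃ e : W ≃ ZMod (2 * m), ∀ c x y, sim c x y ↔ chainRel m c (e x) (e y)

section Update

variable {m : ℕ}

theorem update_chainRel_iff (hm : 2 ≤ m) (c : Agent) (x y : ZMod (2 * m) × Pat) :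
    update (chainRel m) c x y ↔ y = x ∨ y = updatePartner m c x := by
  obtain ⟨k, P⟩ := x
  obtain ⟨k', P'⟩ := y
  cases c <;> cases P <;> cases P' <;>
    simp only [update, recv, Set.mem_univ, Set.mem_singleton_iff, forall_eq, forall_const,
      Bool.forall_bool, chainRel_false_and_true_iff hm, Set.singleton_ne_univ,
      (Set.singleton_ne_univ _).symm] <;>
    simp only [chainRel_iff (m := m) (by omega), updatePartner, Prod.mk.injEq, reduceCtorEq,
      true_and, false_and, and_true, and_false, or_self, or_false, false_or]

theorem isCircularChain_update_chainRel (hm : 2 ≤ m) :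
    IsCircularChain (3 * m) (update (chainRel m)) :=
  ⟨.ofBijective _ (blockPos_bijective (by omega)), fun c x y => by
    rw [Equiv.ofBijective_apply, Equiv.ofBijective_apply, chainRel_blockPos_iff (by omega),
      update_chainRel_iff hm]⟩

theorem IsCircularChain.update {W : Type*} {sim : Agent → W → W → Prop} (hm : 2 ≤ m)
    (h : IsCircularChain m sim) : IsCircularChain (3 * m) (update sim) := by
  obtain ⟨e, he⟩ := h
  obtain ⟨e', he'⟩ := isCircularChain_update_chainRel hm
  refine ⟨(e.prodCongr (.refl Pat)).trans e', fun c x y => ?_⟩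
  simp only [Stmt8.update, he]
  exact he' c (e x.1, x.2) (e y.1, y.2)

end Update

def sqPos : Bool × Bool → ZMod (2 * 2)
  | (false, false) => 0
  | (false, true) => 1
  | (true, true) => 2
  | (true, false) => 3

theorem sqPos_bijective : Function.Bijective sqPos := by
  decide

theorem isCircularChain_sq : IsCircularChain 2 (simIter 0) := by
  refine ⟨.ofBijective sqPos sqPos_bijective, ?_⟩
  show ∀ c (x y : Bool × Bool), simIter 0 c x y ↔ chainRel 2 c (sqPos x) (sqPos y)
  simp only [simIter, chainRel, partner]
  decide

/-- For all `n`, `Sq ⊙ IS^n` is a circular `ab`-chain with `4·3^n` worlds: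
there is a bijection with `ZMod (4·3^n)` carrying its relations to the
alternating-edge cycle relations. -/
theorem sq_iter_is_circular_chain (n : ℕ) :
    ∃ e : WIter n ≃ ZMod (2 * (2 * 3 ^ n)),
      ∀ (c : Agent) (x y : WIter n),
        simIter n c x y ↔ chainRel (2 * 3 ^ n) c (e x) (e y) := by
  induction n with
  | zero => exact isCircularChain_sq
  | succ n ih =>
    have hm : 2 ≤ 2 * 3 ^ n := by have := Nat.one_le_pow n 3 three_pos; omega
    show IsCircularChain (2 * 3 ^ (n + 1)) (update (simIter n))
    rw [show 2 * 3 ^ (n + 1) = 3 * (2 * 3 ^ n) by ring]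
    exact IsCircularChain.update hm ih

end Stmt8
end

section
/- If two pointed epistemic models are collectively n-bisimilar, then they satisfy the same formulas of the language with distributed knowledge operators D_B of modal depth at most n. -/
namespace Stmt12

/-- The epistemic language with distributed knowledge: `p | ¬φ | φ∧φ | D_B φ`
(for nonempty groups `B ⊆ A`). -/
inductive Form (A P : Type) : Type
  | atom : P → Form A P
  | neg : Form A P → Form A P
  | conj : Form A P → Form A P → Form A P
  | dk : (B : Set A) → B.Nonempty → Form A P → Form A P

/-- Modal depth. -/
def md {A P : Type} : Form A P → ℕ
  | .atom _ => 0
  | .neg f => md f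
  | .conj f g => max (md f) (md g)
  | .dk _ _ f => md f + 1

/-- Satisfaction: `D_B φ` holds at `w` iff `φ` holds at all `v` with `v ∼_B w`,
where `∼_B = ⋂_{a∈B} ∼_a`. -/
def Sat {A P W : Type} (sim : A → W → W → Prop) (L : W → Set P) :
    Form A P → W → Prop
  | .atom p, w => p ∈ L w
  | .neg f, w => ¬ Sat sim L f w
  | .conj f g, w => Sat sim L f w ∧ Sat sim L g w
  | .dk B _ f, w => ∀ v, (∀ a ∈ B, sim a w v) → Sat sim L f v

section

variable {A P W W' : Type} {sim : A → W → W → Prop} {L : W → Set P}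
  {sim' : A → W' → W' → Prop} {L' : W' → Set P}

theorem sat_dk_iff_of_forth_back {B : Set A} (hB : B.Nonempty) {f : Form A P}
    {R : W → W' → Prop} {x : W} {y : W'}
    (forth : ∀ x', (∀ a ∈ B, sim a x x') → ∃ y', (∀ a ∈ B, sim' a y y') ∧ R x' y')
    (back : ∀ y', (∀ a ∈ B, sim' a y y') → ∃ x', (∀ a ∈ B, sim a x x') ∧ R x' y')
    (hf : ∀ x' y', R x' y' → (Sat sim L f x' ↔ Sat sim' L' f y')) :
    Sat sim L (.dk B hB f) x ↔ Sat sim' L' (.dk B hB f) y := by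
  constructor
  · intro hx y' hy'
    obtain ⟨x', hx', hR⟩ := back y' hy'
    exact (hf x' y' hR).mp (hx x' hx')
  · intro hy x' hx'
    obtain ⟨y', hy', hR⟩ := forth x' hx'
    exact (hf x' y' hR).mpr (hy y' hy')

end

/-- If two pointed epistemic models are collectively `n`-bisimilar, then they
satisfy the same formulas of modal depth at most `n`. -/
theorem nbisim_implies_same_formulas (A P W W' : Type)
    (sim : A → W → W → Prop) (L : W → Set P)
    (sim' : A → W' → W' → Prop) (L' : W' → Set P)
    (Z : ℕ → W → W' → Prop)
    (hatoms : ∀ k x y, Z k x y → L x = L' y)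
    (hforth : ∀ k, ∀ B : Set A, B.Nonempty → ∀ x x' y, Z (k + 1) x y →
      (∀ a ∈ B, sim a x x') → ∃ y', (∀ a ∈ B, sim' a y y') ∧ Z k x' y')
    (hback : ∀ k, ∀ B : Set A, B.Nonempty → ∀ x y y', Z (k + 1) x y →
      (∀ a ∈ B, sim' a y y') → ∃ x', (∀ a ∈ B, sim a x x') ∧ Z k x' y') :
    ∀ (m : ℕ) (x : W) (y : W'), Z m x y →
      ∀ f : Form A P, md f ≤ m → (Sat sim L f x ↔ Sat sim' L' f y) := by
  intro m x y hZ f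
  induction f generalizing m x y with
  | atom p =>
    intro _
    rw [Sat, Sat, hatoms m x y hZ]
  | neg f ih => exact fun hmd => not_congr (ih m x y hZ hmd)
  | conj f g ihf ihg =>
    intro hmd
    rw [md, max_le_iff] at hmd
    exact and_congr (ihf m x y hZ hmd.1) (ihg m x y hZ hmd.2)
  | dk B hB f ih =>
    intro (hmd : md f + 1 ≤ m)
    obtain ⟨k, rfl⟩ : ∃ k, m = k + 1 := ⟨m - 1, by omega⟩
    have hk : md f ≤ k := by omega
    exact sat_dk_iff_of_forth_back hB (hforth k B hB x · y hZ) (hback k B hB x y · hZ)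
      fun x' y' hZ' => ih k x' y' hZ' hk

end Stmt12
end

section
/- Every formula of communication pattern logic is equivalent to one in iterated update normal form, where every dynamic modality [𝐑ⁿ,σ] is applied only to a formula of the static language (without dynamic modalities); the translation t defined via the reduction axioms, in particular t([𝐑,R]D_B φ) = ⋀_{R'B ≡ RB} D_{RB} t([𝐑,R']φ), preserves logical equivalence. -/
namespace Stmt17

/-- An epistemic model: worlds, relations for each agent, valuation. -/
structure EM (A P : Type) where
  W : Type
  sim : A → W → W → Prop
  L : W → Set P

/-- The language `ℒ°` of communication pattern logic:
`p | ¬φ | φ∧φ | D_B φ | [𝐑,R]φ` with `R ∈ 𝐑`. -/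
inductive Form (A P : Type) : Type
  | atom : P → Form A P
  | neg : Form A P → Form A P
  | conj : Form A P → Form A P → Form A P
  | dk : Set A → Form A P → Form A P
  | cpat : (CG : Set (A → A → Prop)) → (R : A → A → Prop) → R ∈ CG →
      Form A P → Form A P

/-- The update `M ⊙ 𝐑`: worlds `W × 𝐑`, `(w,R) ∼̇_a (w',R')` iff `Ra = R'a` and
`w ∼_{Ra} w'`, valuation unchanged. -/
def update {A P : Type} (M : EM A P) (CG : Set (A → A → Prop)) : EM A P where
  W := M.W × {R // R ∈ CG}
  sim a x y := ({b | x.2.1 b a} = {b | y.2.1 b a}) ∧ ∀ b, x.2.1 b a → M.sim b x.1 y.1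
  L x := M.L x.1

/-- Satisfaction: `M,w ⊨ [𝐑,R]φ` iff `M ⊙ 𝐑,(w,R) ⊨ φ`. -/
def Sat {A P : Type} : Form A P → (M : EM A P) → M.W → Prop
  | .atom p, M, w => p ∈ M.L w
  | .neg f, M, w => ¬ Sat f M w
  | .conj f g, M, w => Sat f M w ∧ Sat g M w
  | .dk B f, M, w => ∀ v, (∀ a ∈ B, M.sim a w v) → Sat f M v
  | .cpat CG R h f, M, w => Sat f (update M CG) (w, ⟨R, h⟩)

/-- Static formulas: no dynamic modalities. -/
inductive Static {A P : Type} : Form A P → Prop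
  | atom (p : P) : Static (.atom p)
  | neg {f} : Static f → Static (.neg f)
  | conj {f g} : Static f → Static g → Static (.conj f g)
  | dk {B f} : Static f → Static (.dk B f)

/-- `[𝐑ⁿ,σ]ψ`: a (possibly empty) sequence of modalities from one pattern `𝐑`
applied to a static formula. -/
inductive Chain {A P : Type} (CG : Set (A → A → Prop)) : Form A P → Prop
  | base {f} : Static f → Chain CG f
  | step {f} (R : A → A → Prop) (h : R ∈ CG) :
      Chain CG f → Chain CG (.cpat CG R h f)

/-- Iterated update normal form: `φ := p | ¬φ | φ∧φ | D_B φ | [𝐑ⁿ,σ]ψ` with `ψ`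
static. -/
inductive IUNF {A P : Type} : Form A P → Prop
  | atom (p : P) : IUNF (.atom p)
  | neg {f} : IUNF f → IUNF (.neg f)
  | conj {f g} : IUNF f → IUNF g → IUNF (.conj f g)
  | dk {B f} : IUNF f → IUNF (.dk B f)
  | chain (CG) {f} : Chain CG f → IUNF f

/-!
With finitely many agents the conjunction in the reduction axiom for `D_B` is finite, so the
reduction axioms push every dynamic modality inward until it disappears: every formula is
equivalent to a static one.

With infinitely many agents that conjunction may be infinite. Instead, spare agents (an embedding
`Zone A ↪ A`) are used to simulate the whole formula `f` inside a model updated twice by a single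
pattern. In `M ⊙ 𝐑₁ ⊙ ⋯ ⊙ 𝐑ₙ`, the worlds `(v, σ)` and `(v', τ)` are indistinguishable for the
agents of `B` iff the relation stacks `σ` and `τ` have the same columns along the cascade
`B, σ₁B, σ₂σ₁B, …` and `v, v'` are indistinguishable for its last set. The pattern contains, for
every address `mb` of `f` and every relation stack `σb` that a `D` at `mb` may choose, a relation
`encRel mb σb` whose columns at "port" agents code these cascades for every `D_B` below `mb`, and
a projection `botRel` that reads the last cascade set off the ports. Replacing each `D_B` by the
`D` of its ports and dropping the dynamic modalities gives a static `ψ` with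
`f ↔ [𝐏, botRel][𝐏, encRel [] []]ψ`.
-/

variable {A P : Type}

def Equivalent (f g : Form A P) : Prop :=
  ∀ (M : EM A P) (w : M.W), Sat f M w ↔ Sat g M w

namespace Equivalent

theorem neg {f g : Form A P} (h : Equivalent f g) : Equivalent (.neg f) (.neg g) :=
  fun M w => not_congr (h M w)

theorem conj {f₁ f₂ g₁ g₂ : Form A P} (h₁ : Equivalent f₁ g₁) (h₂ : Equivalent f₂ g₂) :
    Equivalent (.conj f₁ f₂) (.conj g₁ g₂) :=
  fun M w => and_congr (h₁ M w) (h₂ M w)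

theorem dk {f g : Form A P} (B : Set A) (h : Equivalent f g) : Equivalent (.dk B f) (.dk B g) :=
  fun M _ => forall_congr' fun v => imp_congr_right fun _ => h M v

end Equivalent

theorem sat_foldr_conj (d : Form A P) (l : List (Form A P)) (M : EM A P) (w : M.W) :
    Sat (l.foldr .conj d) M w ↔ Sat d M w ∧ ∀ φ ∈ l, Sat φ M w := by
  induction l with
  | nil => simp
  | cons φ l ih =>
    simp only [List.foldr_cons, Sat, ih, List.forall_mem_cons]
    tauto

/-- The paper's `RB = ⋃_{a ∈ B} Ra`. -/
def colUnion (R : A → A → Prop) (B : Set A) : Set A := {b | ∃ a ∈ B, R b a}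

theorem update_sim_iff (M : EM A P) (CG : Set (A → A → Prop)) (B : Set A)
    (x y : (update M CG).W) :
    (∀ a ∈ B, (update M CG).sim a x y) ↔
      (∀ a ∈ B, {b | x.2.1 b a} = {b | y.2.1 b a}) ∧ ∀ b ∈ colUnion x.2.1 B, M.sim b x.1 y.1 := by
  simp only [update, colUnion, Set.mem_ofPred_eq, forall_exists_index, and_imp]
  exact ⟨fun h => ⟨fun a ha => (h a ha).1, fun b a ha hb => (h a ha).2 b hb⟩,
    fun h a ha => ⟨h.1 a ha, fun b hb => h.2 b a ha hb⟩⟩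

/-- The `R' ∈ 𝐑` with `R'B ≡ RB`. -/
def matchSet (CG : Set (A → A → Prop)) (B : Set A) (R : A → A → Prop) :
    Set (A → A → Prop) :=
  {T | T ∈ CG ∧ ∀ a ∈ B, {b | T b a} = {b | R b a}}

theorem sat_cpat_dk_iff (CG : Set (A → A → Prop)) (R : A → A → Prop) (h : R ∈ CG) (B : Set A)
    (φ : Form A P) (M : EM A P) (w : M.W) :
    Sat (.cpat CG R h (.dk B φ)) M w ↔
      ∀ T (hT : T ∈ matchSet CG B R), Sat (.dk (colUnion R B) (.cpat CG T hT.1 φ)) M w := by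
  constructor
  · intro H T hT v hv
    exact H (v, ⟨T, hT.1⟩) ((update_sim_iff M CG B _ _).2 ⟨fun a ha => (hT.2 a ha).symm, hv⟩)
  · rintro H ⟨v, T, hT⟩ hsim
    obtain ⟨hcols, hguard⟩ := (update_sim_iff M CG B _ _).1 hsim
    exact H T ⟨hT, fun a ha => (hcols a ha).symm⟩ v hguard

theorem Static.foldr_conj {d : Form A P} {l : List (Form A P)} (hd : Static d)
    (hl : ∀ φ ∈ l, Static φ) : Static (l.foldr .conj d) := by
  induction l with
  | nil => exact hd
  | cons φ l ih =>
    rw [List.forall_mem_cons] at hl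
    exact .conj hl.1 (ih hl.2)

section FiniteAgents

variable [Finite A]

/-- For static `ψ`, the static equivalent of `[CG,R]ψ` given by the reduction axioms. The
conjunction over `matchSet` is finite because `A` is; its seed is the redundant conjunct
`R' = R`. -/
noncomputable def reduce (CG : Set (A → A → Prop)) : (A → A → Prop) → Form A P → Form A P
  | _, .atom p => .atom p
  | R, .neg ψ => .neg (reduce CG R ψ)
  | R, .conj ψ₁ ψ₂ => .conj (reduce CG R ψ₁) (reduce CG R ψ₂)
  | R, .dk B ψ =>
      ((matchSet CG B R).toFinite.toFinset.toList.map
        fun T => .dk (colUnion R B) (reduce CG T ψ)).foldr .conj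
        (.dk (colUnion R B) (reduce CG R ψ))
  | _, .cpat CG' R' h' ψ => .cpat CG' R' h' ψ

theorem Static.reduce {ψ : Form A P} (hψ : Static ψ) (CG : Set (A → A → Prop))
    (R : A → A → Prop) : Static (reduce CG R ψ) := by
  induction hψ generalizing R with
  | atom p => exact .atom p
  | neg _ ih => exact .neg (ih R)
  | conj _ _ ih₁ ih₂ => exact .conj (ih₁ R) (ih₂ R)
  | dk _ ih =>
    refine .foldr_conj (.dk (ih R)) ?_
    simp only [List.forall_mem_map]
    exact fun T _ => .dk (ih T)

theorem equivalent_reduce {ψ : Form A P} (hψ : Static ψ) (CG : Set (A → A → Prop))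
    (R : A → A → Prop) (h : R ∈ CG) : Equivalent (.cpat CG R h ψ) (reduce CG R ψ) := by
  induction hψ generalizing R with
  | atom p => exact fun M w => Iff.rfl
  | neg _ ih => exact fun M w => not_congr (ih R h _ _)
  | conj _ _ ih₁ ih₂ => exact fun M w => and_congr (ih₁ R h _ _) (ih₂ R h _ _)
  | @dk B ψ _ ih =>
    intro M w
    rw [sat_cpat_dk_iff, Stmt17.reduce, sat_foldr_conj]
    simp only [List.forall_mem_map, Finset.mem_toList, Set.Finite.mem_toFinset]
    have key : ∀ T (hT : T ∈ CG), Sat (.dk (colUnion R B) (.cpat CG T hT ψ)) M w ↔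
        Sat (.dk (colUnion R B) (reduce CG T ψ)) M w := fun T hT => (ih T hT).dk _ M w
    exact ⟨fun H => ⟨(key R h).1 (H R ⟨h, fun _ _ => rfl⟩), fun T hT => (key T hT.1).1 (H T hT)⟩,
      fun ⟨_, H⟩ T hT => (key T hT.1).2 (H T hT)⟩

theorem exists_static_equivalent (f : Form A P) : ∃ s, Static s ∧ Equivalent f s := by
  induction f with
  | atom p => exact ⟨.atom p, .atom p, fun _ _ => Iff.rfl⟩
  | neg f ih =>
    obtain ⟨s, hs, he⟩ := ih
    exact ⟨.neg s, .neg hs, he.neg⟩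
  | conj f₁ f₂ ih₁ ih₂ =>
    obtain ⟨s₁, hs₁, he₁⟩ := ih₁
    obtain ⟨s₂, hs₂, he₂⟩ := ih₂
    exact ⟨.conj s₁ s₂, .conj hs₁ hs₂, he₁.conj he₂⟩
  | dk B f ih =>
    obtain ⟨s, hs, he⟩ := ih
    exact ⟨.dk B s, .dk hs, he.dk B⟩
  | cpat CG R h f ih =>
    obtain ⟨s, hs, he⟩ := ih
    exact ⟨reduce CG R s, hs.reduce CG R, fun M w =>
      (he (update M CG) (w, ⟨R, h⟩)).trans (equivalent_reduce hs CG R h M w)⟩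

end FiniteAgents

def updates (M : EM A P) : List (Set (A → A → Prop)) → EM A P
  | [] => M
  | CG :: ls => update (updates M ls) CG

/-- The world `(v, σ)` of `updates M ls`; the head of `σ` is the relation of the last update. -/
def stackWorld {M : EM A P} : (σ : List (A → A → Prop)) → (ls : List (Set (A → A → Prop))) →
    List.Forall₂ (· ∈ ·) σ ls → M.W → (updates M ls).W
  | [], [], _, v => v
  | U :: σ, _ :: ls, h, v =>
    (stackWorld σ ls (List.forall₂_cons.1 h).2 v, ⟨U, (List.forall₂_cons.1 h).1⟩)
  | [], _ :: _, h, _ => absurd h (by simp)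
  | _ :: _, [], h, _ => absurd h (by simp)

theorem exists_eq_stackWorld {M : EM A P} {ls : List (Set (A → A → Prop))} (x : (updates M ls).W) :
    ∃ σ hσ v, x = stackWorld σ ls hσ v := by
  induction ls with
  | nil => exact ⟨[], .nil, x, rfl⟩
  | cons CG ls ih =>
    obtain ⟨x, T, hT⟩ := x
    obtain ⟨σ, hσ, v, rfl⟩ := ih x
    exact ⟨T :: σ, .cons hT hσ, v, rfl⟩

theorem updates_L_stackWorld {M : EM A P} {ls : List (Set (A → A → Prop))} {σ : List (A → A → Prop)}
    (hσ : List.Forall₂ (· ∈ ·) σ ls) (v : M.W) :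
    (updates M ls).L (stackWorld σ ls hσ v) = M.L v := by
  induction hσ with
  | nil => rfl
  | cons _ _ ih => exact ih

/-- The agents whose accessibility in `M` is inherited by the agents of `B` through the stack. -/
def guard : Set A → List (A → A → Prop) → Set A
  | B, [] => B
  | B, U :: σ => guard (colUnion U B) σ

def AgreeOn : Set A → List (A → A → Prop) → List (A → A → Prop) → Prop
  | _, [], [] => True
  | B, U :: σ, V :: τ => (∀ a ∈ B, {b | U b a} = {b | V b a}) ∧ AgreeOn (colUnion U B) σ τ
  | _, _, _ => False

theorem colUnion_congr {B : Set A} {U V : A → A → Prop}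
    (h : ∀ a ∈ B, {b | U b a} = {b | V b a}) : colUnion U B = colUnion V B := by
  ext b
  exact exists_congr fun a => and_congr_right fun ha => Set.ext_iff.1 (h a ha) b

theorem AgreeOn.guard_eq : ∀ {B : Set A} {σ τ : List (A → A → Prop)}, AgreeOn B σ τ →
    guard B σ = guard B τ
  | _, [], [], _ => rfl
  | _, _ :: _, _ :: _, ⟨h, hσ⟩ => by
    rw [guard, guard, ← colUnion_congr h]
    exact hσ.guard_eq

theorem updates_sim_iff {M : EM A P} {ls : List (Set (A → A → Prop))} {σ τ : List (A → A → Prop)}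
    (hσ : List.Forall₂ (· ∈ ·) σ ls) (hτ : List.Forall₂ (· ∈ ·) τ ls) (v v' : M.W) (B : Set A) :
    (∀ a ∈ B, (updates M ls).sim a (stackWorld σ ls hσ v) (stackWorld τ ls hτ v')) ↔
      AgreeOn B σ τ ∧ ∀ c ∈ guard B σ, M.sim c v v' := by
  induction ls generalizing σ τ B with
  | nil =>
    cases hσ; cases hτ
    simp only [AgreeOn, guard, true_and]
    exact Iff.rfl
  | cons CG ls ih =>
    cases hσ with | cons _ hσ' =>
    cases hτ with | cons _ hτ' =>
    exact (update_sim_iff _ CG B _ _).trans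
      ((and_congr_right fun _ => ih hσ' hτ' _).trans and_assoc.symm)

theorem sat_dk_updates_iff {M : EM A P} {ls : List (Set (A → A → Prop))}
    {σ : List (A → A → Prop)} (hσ : List.Forall₂ (· ∈ ·) σ ls) (v : M.W) (B : Set A)
    (φ : Form A P) :
    Sat (.dk B φ) (updates M ls) (stackWorld σ ls hσ v) ↔
      ∀ τ (hτ : List.Forall₂ (· ∈ ·) τ ls) v', AgreeOn B σ τ →
        (∀ c ∈ guard B σ, M.sim c v v') → Sat φ (updates M ls) (stackWorld τ ls hτ v') := by
  refine ⟨fun H τ hτ v' hA hg => H _ ((updates_sim_iff hσ hτ v v' B).2 ⟨hA, hg⟩), ?_⟩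
  intro H x hx
  obtain ⟨τ, hτ, v', rfl⟩ := exists_eq_stackWorld x
  obtain ⟨hA, hg⟩ := (updates_sim_iff hσ hτ v v' B).1 hx
  exact H τ hτ v' hA hg

/-- Descends into a formula along an address (`false` selects the first argument, `true` the
second conjunct), pushing the relation and the pattern of every dynamic modality it passes. -/
def walk : Form A P → List (A → A → Prop) → List (Set (A → A → Prop)) → List Bool →
    Option (Form A P × List (A → A → Prop) × List (Set (A → A → Prop)))
  | φ, σ, ls, [] => some (φ, σ, ls)
  | .neg φ, σ, ls, false :: r => walk φ σ ls r
  | .conj φ _, σ, ls, false :: r => walk φ σ ls r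
  | .conj _ ψ, σ, ls, true :: r => walk ψ σ ls r
  | .dk _ φ, σ, ls, false :: r => walk φ σ ls r
  | .cpat CG R _ φ, σ, ls, false :: r => walk φ (R :: σ) (CG :: ls) r
  | _, _, _, _ => none

@[simp]
theorem walk_nil (φ : Form A P) (σ : List (A → A → Prop)) (ls : List (Set (A → A → Prop))) :
    walk φ σ ls [] = some (φ, σ, ls) := by
  cases φ <;> rfl

theorem walk_append (r₁ r₂ : List Bool) (φ : Form A P) (σ : List (A → A → Prop))
    (ls : List (Set (A → A → Prop))) :
    walk φ σ ls (r₁ ++ r₂) = (walk φ σ ls r₁).bind fun x => walk x.1 x.2.1 x.2.2 r₂ := by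
  induction r₁ generalizing φ σ ls with
  | nil => simp
  | cons b r ih => cases φ <;> cases b <;> simp [walk, ih]

theorem walk_forall₂ {r : List Bool} {φ ψ : Form A P} {σ τ : List (A → A → Prop)}
    {ls ls' : List (Set (A → A → Prop))} (h : walk φ σ ls r = some (ψ, τ, ls'))
    (hσ : List.Forall₂ (· ∈ ·) σ ls) : List.Forall₂ (· ∈ ·) τ ls' := by
  induction r generalizing φ σ ls with
  | nil =>
    cases Option.some.inj ((walk_nil φ σ ls).symm.trans h)
    exact hσ
  | cons b r ih =>
    cases φ <;> cases b <;> simp only [walk, reduceCtorEq] at h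
    all_goals first
      | exact ih h hσ
      | exact ih h (.cons ‹_› hσ)

theorem exists_walk_of_walk {r : List Bool} {φ ψ : Form A P} {σ τ : List (A → A → Prop)}
    {ls ls' : List (Set (A → A → Prop))} (h : walk φ σ ls r = some (ψ, τ, ls'))
    (σ' : List (A → A → Prop)) : ∃ τ', walk φ σ' ls r = some (ψ, τ', ls') := by
  induction r generalizing φ σ σ' ls with
  | nil =>
    cases Option.some.inj ((walk_nil φ σ ls).symm.trans h)
    exact ⟨σ', walk_nil _ _ _⟩
  | cons b r ih =>
    cases φ <;> cases b <;> simp only [walk, reduceCtorEq] at h ⊢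
    all_goals exact ih h _

section Stack

variable (F : Form A P)

/-- The subformula of `F` at the address `m`, its relation stack and its pattern stack, where the
relation stack is the one chosen at the address `mb` above `m` extended by the modalities from
`mb` down to `m`. -/
def stackAt (mb : List Bool) (σb : List (A → A → Prop)) (m : List Bool) :
    Option (Form A P × List (A → A → Prop) × List (Set (A → A → Prop))) :=
  if mb <+: m then (walk F [] [] mb).bind fun x => walk x.1 σb x.2.2 (m.drop mb.length) else none

def Valid (mb : List Bool) (σb : List (A → A → Prop)) : Prop :=
  ∃ φ σ ls, walk F [] [] mb = some (φ, σ, ls) ∧ List.Forall₂ (· ∈ ·) σb ls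

variable {F}

theorem stackAt_self {m : List Bool} {φ : Form A P} {σ : List (A → A → Prop)}
    {ls : List (Set (A → A → Prop))} (h : walk F [] [] m = some (φ, σ, ls))
    (τ : List (A → A → Prop)) : stackAt F m τ m = some (φ, τ, ls) := by
  simp [stackAt, h]

theorem stackAt_append {mb m : List Bool} {σb U : List (A → A → Prop)} {φ : Form A P}
    {ls : List (Set (A → A → Prop))} (h : stackAt F mb σb m = some (φ, U, ls))
    (r : List Bool) : stackAt F mb σb (m ++ r) = walk φ U ls r := by
  unfold stackAt at h ⊢
  split_ifs at h with hp
  rw [if_pos (hp.trans (List.prefix_append m r)), List.drop_append_of_le_length hp.length_le]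
  simp only [walk_append, ← Option.bind_assoc, h, Option.bind_some]

theorem stackAt_forall₂ {mb m : List Bool} {σb U : List (A → A → Prop)} {φ : Form A P}
    {ls : List (Set (A → A → Prop))} (hv : Valid F mb σb)
    (h : stackAt F mb σb m = some (φ, U, ls)) : List.Forall₂ (· ∈ ·) U ls := by
  obtain ⟨φb, σ, lsb, hb, hσb⟩ := hv
  unfold stackAt at h
  split_ifs at h
  rw [hb, Option.bind_some] at h
  exact walk_forall₂ h hσb

theorem stackAt_walk {mb m : List Bool} {σb U : List (A → A → Prop)} {φ : Form A P}
    {ls : List (Set (A → A → Prop))} (h : stackAt F mb σb m = some (φ, U, ls)) :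
    ∃ σ, walk F [] [] m = some (φ, σ, ls) := by
  unfold stackAt at h
  split_ifs at h with hp
  obtain ⟨r, rfl⟩ := hp
  rw [List.drop_left] at h
  obtain ⟨⟨φb, σ, lsb⟩, hb, hr⟩ := Option.bind_eq_some_iff.1 h
  rw [walk_append, hb, Option.bind_some]
  exact exists_walk_of_walk hr σ

end Stack

/-- Agents reserved by the encoding of nested patterns into a single one. -/
inductive Zone (A : Type) : Type
  | agent : A → Zone A
  | edge : A → A → Zone A
  | port : ℕ → List Bool → Zone A
  | mark : Zone A

def Zone.toSum : Zone A → A ⊕ (A × A) ⊕ (ℕ × List Bool) ⊕ Unit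
  | .agent c => .inl c
  | .edge b a => .inr (.inl (b, a))
  | .port i m => .inr (.inr (.inl (i, m)))
  | .mark => .inr (.inr (.inr ()))

theorem Zone.toSum_injective : (Zone.toSum : Zone A → _).Injective := by
  intro x y h
  cases x <;> cases y <;> simp_all [Zone.toSum]

open Cardinal in
theorem nonempty_zone_embedding (A : Type) [Infinite A] : Nonempty (Zone A ↪ A) := by
  have hA := aleph0_le_mk A
  refine Cardinal.le_def _ _ |>.1 <| (mk_le_of_injective Zone.toSum_injective).trans ?_
  simp only [mk_sum, mk_prod, lift_id, mul_eq_self hA, mk_punit]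
  exact add_le_of_le hA le_rfl (add_le_of_le hA le_rfl
    (add_le_of_le hA (mk_le_aleph0.trans hA) (one_le_aleph0.trans hA)))

section Encoding

variable (emb : Zone A ↪ A)

def codeCol (B : Set A) (U : A → A → Prop) : Set A :=
  {x | ∃ a ∈ B, ∃ b, U b a ∧ x = emb (.edge b a)}

def codes : Set A → List (A → A → Prop) → List (Set A)
  | _, [] => []
  | B, U :: σ => codeCol emb B U :: codes (colUnion U B) σ

/-- `mark` keeps this column nonempty, so a port column is empty exactly when the port belongs to
no `D` below the chosen address. -/
def guardCol (S : Set A) : Set A := insert (emb .mark) ((fun c => emb (.agent c)) '' S)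

def portCols (B : Set A) (σ : List (A → A → Prop)) : List (Set A) :=
  guardCol emb (guard B σ) :: codes emb B σ

variable {emb}

theorem codeCol_eq_iff {B : Set A} {U V : A → A → Prop} :
    codeCol emb B U = codeCol emb B V ↔ ∀ a ∈ B, {b | U b a} = {b | V b a} := by
  have mem_iff : ∀ {W : A → A → Prop} {b a}, emb (.edge b a) ∈ codeCol emb B W ↔ a ∈ B ∧ W b a := by
    intro W b a
    simp [codeCol, emb.injective.eq_iff]
  constructor
  · intro h a ha
    ext b
    simpa [mem_iff, ha] using Set.ext_iff.1 h (emb (.edge b a))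
  · intro h
    ext x
    simp only [codeCol, Set.mem_ofPred_eq]
    exact exists_congr fun a => and_congr_right fun ha => exists_congr fun b =>
      and_congr_left fun _ => Set.ext_iff.1 (h a ha) b

theorem codes_eq_iff : ∀ {B : Set A} {σ τ : List (A → A → Prop)},
    codes emb B σ = codes emb B τ ↔ AgreeOn B σ τ
  | _, [], [] => by simp [codes, AgreeOn]
  | _, [], _ :: _ => by simp [codes, AgreeOn]
  | _, _ :: _, [] => by simp [codes, AgreeOn]
  | B, U :: σ, V :: τ => by
    simp only [codes, List.cons.injEq, AgreeOn, codeCol_eq_iff]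
    refine and_congr_right fun h => ?_
    rw [colUnion_congr h]
    exact codes_eq_iff

theorem portCols_eq_iff {B : Set A} {σ τ : List (A → A → Prop)} :
    portCols emb B σ = portCols emb B τ ↔ AgreeOn B σ τ := by
  simp only [portCols, List.cons.injEq, codes_eq_iff]
  exact ⟨And.right, fun h => ⟨by rw [h.guard_eq], h⟩⟩

theorem length_portCols (B : Set A) (σ : List (A → A → Prop)) :
    (portCols emb B σ).length = σ.length + 1 := by
  suffices ∀ B, (codes emb B σ).length = σ.length by simp [portCols, this]
  induction σ with
  | nil => simp [codes]
  | cons U σ ih => simp [codes, ih]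

theorem agent_mem_getD_portCols_iff {B : Set A} {σ : List (A → A → Prop)} {c : A} {i : ℕ} :
    emb (.agent c) ∈ (portCols emb B σ).getD i ∅ ↔ i = 0 ∧ c ∈ guard B σ := by
  cases i with
  | zero => simp [portCols, guardCol, emb.injective.eq_iff]
  | succ i =>
    suffices ∀ B, ∀ X ∈ codes emb B σ, emb (.agent c) ∉ X by
      simp only [portCols, List.getD_cons_succ, Nat.add_one_ne_zero, false_and, iff_false]
      intro hc
      by_cases hi : i < (codes emb B σ).length
      · rw [List.getD_eq_getElem _ _ hi] at hc
        exact this B _ (List.getElem_mem hi) hc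
      · rw [List.getD_eq_default _ _ (not_lt.1 hi)] at hc
        exact hc
    induction σ with
    | nil => simp [codes]
    | cons U σ ih =>
      intro B X hX
      simp only [codes, List.mem_cons] at hX
      rcases hX with rfl | hX
      · simp [codeCol, emb.injective.eq_iff]
      · exact ih _ X hX

variable (emb) (F : Form A P)

def portCol (mb : List Bool) (σb : List (A → A → Prop)) (i : ℕ) (m : List Bool) : Set A :=
  match stackAt F mb σb m with
  | some (.dk B _, σ, _) => (portCols emb B σ).getD i ∅
  | _ => ∅

/-- Encodes the relation stack `σb` chosen at the address `mb`: for `D_B` at an address `m` below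
`mb`, evaluated at the stack `σ`, the columns at the ports `(0, m), (1, m), …` are
`portCols emb B σ`. The full column at `mark` tells it apart from `botRel`. -/
def encRel (mb : List Bool) (σb : List (A → A → Prop)) : A → A → Prop := fun b a =>
  a = emb .mark ∨ ∃ i m, a = emb (.port i m) ∧ b ∈ portCol emb F mb σb i m

def botRel : A → A → Prop := fun b a => a = emb (.agent b)

def pattern : Set (A → A → Prop) :=
  insert (botRel emb) {E | ∃ mb σb, Valid F mb σb ∧ E = encRel emb F mb σb}

def ports (m : List Bool) (k : ℕ) : Set A := (fun i => emb (.port i m)) '' Set.Iic k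

def flatten : Form A P → List Bool → ℕ → Form A P
  | .atom p, _, _ => .atom p
  | .neg φ, m, k => .neg (flatten φ (m ++ [false]) k)
  | .conj φ ψ, m, k => .conj (flatten φ (m ++ [false]) k) (flatten ψ (m ++ [true]) k)
  | .dk _ φ, m, k => .dk (ports emb m k) (flatten φ (m ++ [false]) k)
  | .cpat _ _ _ φ, m, k => flatten φ (m ++ [false]) (k + 1)

variable {emb F}

theorem botRel_mem_pattern : botRel emb ∈ pattern emb F := Set.mem_insert _ _

theorem encRel_mem_pattern {mb : List Bool} {σb : List (A → A → Prop)} (hv : Valid F mb σb) :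
    encRel emb F mb σb ∈ pattern emb F :=
  Set.mem_insert_of_mem _ ⟨mb, σb, hv, rfl⟩

theorem setOf_encRel_port (mb : List Bool) (σb : List (A → A → Prop)) (i : ℕ) (m : List Bool) :
    {b | encRel emb F mb σb b (emb (.port i m))} = portCol emb F mb σb i m := by
  ext b
  simp [encRel, emb.injective.eq_iff]

theorem setOf_encRel_mark (mb : List Bool) (σb : List (A → A → Prop)) :
    {b | encRel emb F mb σb b (emb .mark)} = Set.univ := by
  ext b
  simp [encRel]

theorem setOf_botRel_port (i : ℕ) (m : List Bool) :
    {b | botRel emb b (emb (.port i m))} = ∅ := by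
  ext b
  simp [botRel, emb.injective.eq_iff]

theorem setOf_botRel_mark : {b | botRel emb b (emb .mark)} = ∅ := by
  ext b
  simp [botRel, emb.injective.eq_iff]

theorem colUnion_botRel (X : Set A) : colUnion (botRel emb) X = {c | emb (.agent c) ∈ X} := by
  ext c
  simp [colUnion, botRel]

theorem colUnion_encRel_ports (mb : List Bool) (σb : List (A → A → Prop)) (m : List Bool)
    (k : ℕ) : colUnion (encRel emb F mb σb) (ports emb m k) =
      {b | ∃ i ≤ k, b ∈ portCol emb F mb σb i m} := by
  ext b
  simp only [colUnion, ports, Set.mem_image, Set.mem_Iic, Set.mem_ofPred_eq]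
  constructor
  · rintro ⟨_, ⟨i, hi, rfl⟩, hb⟩
    exact ⟨i, hi, Set.ext_iff.1 (setOf_encRel_port mb σb i m) b |>.1 hb⟩
  · rintro ⟨i, hi, hb⟩
    exact ⟨_, ⟨i, hi, rfl⟩, Set.ext_iff.1 (setOf_encRel_port mb σb i m) b |>.2 hb⟩

theorem portCol_of_stackAt {mb m : List Bool} {σb U : List (A → A → Prop)} {B : Set A}
    {φ : Form A P} {ls : List (Set (A → A → Prop))}
    (h : stackAt F mb σb m = some (.dk B φ, U, ls)) (i : ℕ) :
    portCol emb F mb σb i m = (portCols emb B U).getD i ∅ := by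
  simp [portCol, h]

theorem exists_stackAt_of_mem_portCol {mb m : List Bool} {σb : List (A → A → Prop)} {i : ℕ}
    {x : A} (hx : x ∈ portCol emb F mb σb i m) :
    ∃ B φ U ls, stackAt F mb σb m = some (.dk B φ, U, ls) := by
  unfold portCol at hx
  split at hx
  · exact ⟨_, _, _, _, ‹_›⟩
  · exact hx.elim

theorem mark_mem_portCol_zero {mb m : List Bool} {σb U : List (A → A → Prop)} {B : Set A}
    {φ : Form A P} {ls : List (Set (A → A → Prop))}
    (h : stackAt F mb σb m = some (.dk B φ, U, ls)) :
    emb .mark ∈ portCol emb F mb σb 0 m := by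
  simp [portCol_of_stackAt h, portCols, guardCol]

theorem guard_ports {mb m : List Bool} {σb U : List (A → A → Prop)} {B : Set A}
    {φ : Form A P} {ls : List (Set (A → A → Prop))}
    (h : stackAt F mb σb m = some (.dk B φ, U, ls)) (k : ℕ) :
    guard (ports emb m k) [encRel emb F mb σb, botRel emb] = guard B U := by
  ext c
  simp only [guard, colUnion_botRel, colUnion_encRel_ports, portCol_of_stackAt h,
    agent_mem_getD_portCols_iff, Set.mem_ofPred_eq]
  exact ⟨fun ⟨_, _, _, hc⟩ => hc, fun hc => ⟨0, Nat.zero_le k, rfl, hc⟩⟩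

theorem eq_botRel_of_setOf_mark {E : A → A → Prop} (hE : E ∈ pattern emb F)
    (h : {b | E b (emb .mark)} = ∅) : E = botRel emb := by
  obtain rfl | ⟨mb, σb, -, rfl⟩ := hE
  · rfl
  · rw [setOf_encRel_mark] at h
    exact absurd h (Set.nonempty_of_mem (Set.mem_univ (emb .mark))).ne_empty

theorem setOf_encRel_ports_eq_iff {mb mb' m : List Bool} {σb σb' U : List (A → A → Prop)}
    {B : Set A} {φ : Form A P} {ls : List (Set (A → A → Prop))} (hv : Valid F mb σb)
    (hv' : Valid F mb' σb') (h : stackAt F mb σb m = some (.dk B φ, U, ls)) :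
    (∀ a ∈ ports emb m ls.length,
      {b | encRel emb F mb σb b a} = {b | encRel emb F mb' σb' b a}) ↔
      ∃ V, stackAt F mb' σb' m = some (.dk B φ, V, ls) ∧ AgreeOn B U V := by
  simp only [ports, Set.forall_mem_image, Set.mem_Iic, setOf_encRel_port]
  constructor
  · intro H
    obtain ⟨B', φ', V, ls', h'⟩ :=
      exists_stackAt_of_mem_portCol (@H 0 (Nat.zero_le _) ▸ mark_mem_portCol_zero h)
    obtain ⟨σ, hσ⟩ := stackAt_walk h
    obtain ⟨σ', hσ'⟩ := stackAt_walk h'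
    rw [hσ] at hσ'
    simp only [Option.some.injEq, Prod.mk.injEq, Form.dk.injEq] at hσ'
    obtain ⟨⟨rfl, rfl⟩, -, rfl⟩ := hσ'
    have hlen := (stackAt_forall₂ hv h).length_eq
    have hlen' := (stackAt_forall₂ hv' h').length_eq
    refine ⟨V, h', (portCols_eq_iff (emb := emb)).1 (List.ext_getElem ?_ fun i hi hi' => ?_)⟩
    · rw [length_portCols, length_portCols, hlen, hlen']
    · have hi'' : i ≤ ls.length := by
        rw [length_portCols, hlen] at hi
        omega
      have := H hi''
      rwa [portCol_of_stackAt h, portCol_of_stackAt h', List.getD_eq_getElem _ _ hi,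
        List.getD_eq_getElem _ _ hi'] at this
  · rintro ⟨V, h', hA⟩ i -
    rw [portCol_of_stackAt h, portCol_of_stackAt h', portCols_eq_iff.2 hA]

theorem agreeOn_ports_iff {mb m : List Bool} {σb U : List (A → A → Prop)} {B : Set A}
    {φ : Form A P} {ls : List (Set (A → A → Prop))} (hv : Valid F mb σb)
    (h : stackAt F mb σb m = some (.dk B φ, U, ls)) {τ : List (A → A → Prop)}
    (hτ : List.Forall₂ (· ∈ ·) τ [pattern emb F, pattern emb F]) :
    AgreeOn (ports emb m ls.length) [encRel emb F mb σb, botRel emb] τ ↔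
      ∃ mb' σb' V, Valid F mb' σb' ∧ τ = [encRel emb F mb' σb', botRel emb] ∧
        stackAt F mb' σb' m = some (.dk B φ, V, ls) ∧ AgreeOn B U V := by
  obtain ⟨E, E', hE, hE', rfl⟩ :
      ∃ E E', E ∈ pattern emb F ∧ E' ∈ pattern emb F ∧ τ = [E, E'] := by
    rcases hτ with _ | ⟨hE, _ | ⟨hE', _ | _⟩⟩
    exact ⟨_, _, hE, hE', rfl⟩
  have port_mem : emb (.port 0 m) ∈ ports emb m ls.length := ⟨0, Nat.zero_le _, rfl⟩
  simp only [AgreeOn, and_true, List.cons.injEq]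
  constructor
  · rintro ⟨hports, hmark⟩
    obtain rfl : E' = botRel emb := by
      refine eq_botRel_of_setOf_mark hE' ((hmark _ ?_).symm.trans setOf_botRel_mark)
      rw [colUnion_encRel_ports]
      exact ⟨0, Nat.zero_le _, mark_mem_portCol_zero h⟩
    obtain rfl | ⟨mb', σb', hv', rfl⟩ := hE
    · have hport := hports _ port_mem
      rw [setOf_encRel_port, setOf_botRel_port] at hport
      exact absurd (hport ▸ mark_mem_portCol_zero h) (Set.notMem_empty _)
    · obtain ⟨V, h', hA⟩ := (setOf_encRel_ports_eq_iff hv hv' h).1 hports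
      exact ⟨mb', σb', V, hv', ⟨rfl, rfl⟩, h', hA⟩
  · rintro ⟨mb', σb', V, hv', ⟨rfl, rfl⟩, h', hA⟩
    exact ⟨(setOf_encRel_ports_eq_iff hv hv' h).2 ⟨V, h', hA⟩, fun _ _ => rfl⟩

variable (emb)

theorem static_flatten (φ : Form A P) (m : List Bool) (k : ℕ) : Static (flatten emb φ m k) := by
  induction φ generalizing m k with
  | atom p => exact .atom p
  | neg _ ih => exact .neg (ih _ _)
  | conj _ _ ih₁ ih₂ => exact .conj (ih₁ _ _) (ih₂ _ _)
  | dk _ _ ih => exact .dk (ih _ _)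
  | cpat _ _ _ _ ih => exact ih _ _

/-- The world `((v, botRel), E)` of the model updated twice by `pattern emb F`. -/
def simWorld {M : EM A P} {E : A → A → Prop} (hE : E ∈ pattern emb F) (v : M.W) :
    (updates M [pattern emb F, pattern emb F]).W :=
  stackWorld [E, botRel emb] _ (.cons hE (.cons botRel_mem_pattern .nil)) v

theorem sat_dk_iff_sat_flatten (M : EM A P) {mb m : List Bool} {σb U : List (A → A → Prop)}
    {B : Set A} {φ : Form A P} {ls : List (Set (A → A → Prop))} (hv : Valid F mb σb)
    (h : stackAt F mb σb m = some (.dk B φ, U, ls)) (hU : List.Forall₂ (· ∈ ·) U ls) (v : M.W)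
    (ih : ∀ mb' σb' V (hv' : Valid F mb' σb'),
      stackAt F mb' σb' (m ++ [false]) = some (φ, V, ls) → ∀ (hV : List.Forall₂ (· ∈ ·) V ls) v',
        (Sat φ (updates M ls) (stackWorld V ls hV v') ↔
          Sat (flatten emb φ (m ++ [false]) ls.length) _
            (simWorld emb (encRel_mem_pattern hv') v'))) :
    Sat (.dk B φ) (updates M ls) (stackWorld U ls hU v) ↔
      Sat (flatten emb (.dk B φ) m ls.length) _ (simWorld emb (encRel_mem_pattern hv) v) := by
  rw [flatten, simWorld, sat_dk_updates_iff, sat_dk_updates_iff, guard_ports h]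
  constructor
  · intro H τ hτ v' hA hg
    obtain ⟨mb', σb', V, hv', rfl, h', hUV⟩ := (agreeOn_ports_iff hv h hτ).1 hA
    have hV := stackAt_forall₂ hv' h'
    exact (ih mb' σb' V hv' (by simp [stackAt_append h', walk]) hV v').1 (H V hV v' hUV hg)
  · intro H V hV v' hUV hg
    obtain ⟨σ, hσ⟩ := stackAt_walk h
    have hv' : Valid F m V := ⟨_, _, _, hσ, hV⟩
    have h' := stackAt_self hσ V
    have hτ : List.Forall₂ (· ∈ ·) [encRel emb F m V, botRel emb] [pattern emb F, pattern emb F] :=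
      .cons (encRel_mem_pattern hv') (.cons botRel_mem_pattern .nil)
    refine (ih m V V hv' (by simp [stackAt_append h', walk]) hV v').2 (H _ hτ v' ?_ hg)
    exact (agreeOn_ports_iff hv h hτ).2 ⟨m, V, V, hv', rfl, h', hUV⟩

theorem sat_iff_sat_flatten (M : EM A P) (φ : Form A P) {mb m : List Bool}
    {σb U : List (A → A → Prop)} {ls : List (Set (A → A → Prop))} (hv : Valid F mb σb)
    (h : stackAt F mb σb m = some (φ, U, ls)) (hU : List.Forall₂ (· ∈ ·) U ls) (v : M.W) :
    Sat φ (updates M ls) (stackWorld U ls hU v) ↔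
      Sat (flatten emb φ m ls.length) _ (simWorld emb (encRel_mem_pattern hv) v) := by
  induction φ generalizing mb m σb U ls v with
  | atom p =>
    show p ∈ (updates M ls).L _ ↔ p ∈ (updates M _).L _
    rw [simWorld, updates_L_stackWorld, updates_L_stackWorld]
  | neg φ ih => exact not_congr (ih hv (by simp [stackAt_append h, walk]) hU v)
  | conj φ ψ ih₁ ih₂ =>
    exact and_congr (ih₁ hv (by simp [stackAt_append h, walk]) hU v)
      (ih₂ hv (by simp [stackAt_append h, walk]) hU v)
  | dk B φ ih =>
    exact sat_dk_iff_sat_flatten emb M hv h hU v fun mb' σb' V hv' h' hV v' => ih hv' h' hV v'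
  | cpat CG R hR φ ih => exact ih hv (by simp [stackAt_append h, walk]) (.cons hR hU) v

end Encoding

theorem exists_chain_equivalent [Infinite A] (f : Form A P) :
    ∃ (CG : Set (A → A → Prop)) (R₁ R₂ : A → A → Prop) (h₁ : R₁ ∈ CG) (h₂ : R₂ ∈ CG)
      (ψ : Form A P), Static ψ ∧ Equivalent f (.cpat CG R₁ h₁ (.cpat CG R₂ h₂ ψ)) := by
  obtain ⟨emb⟩ := nonempty_zone_embedding A
  have hv : Valid f [] [] := ⟨f, [], [], walk_nil .., .nil⟩
  exact ⟨pattern emb f, botRel emb, encRel emb f [] [], botRel_mem_pattern,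
    encRel_mem_pattern hv, flatten emb f [] 0, static_flatten emb .., fun M w =>
      sat_iff_sat_flatten emb M f hv (stackAt_self (walk_nil ..) []) .nil w⟩

/-- Every formula of communication pattern logic is logically equivalent to one
in iterated update normal form. -/
theorem iunf_normal_form (A P : Type) (f : Form A P) :
    ∃ g : Form A P, IUNF g ∧ ∀ (M : EM A P) (w : M.W), Sat f M w ↔ Sat g M w := by
  cases finite_or_infinite A
  · obtain ⟨s, hs, he⟩ := exists_static_equivalent f
    exact ⟨s, .chain ∅ (.base hs), he⟩
  · obtain ⟨CG, R₁, R₂, h₁, h₂, ψ, hψ, he⟩ := exists_chain_equivalent f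
    exact ⟨_, .chain CG (.step R₁ h₁ (.step R₂ h₂ (.base hψ))), he⟩

end Stmt17
end

section
/- The reduction axiom for distributed knowledge under communication pattern update is valid: M,w ⊨ [𝐑,R]D_B φ if and only if M,w ⊨ ⋀_{R' ∈ 𝐑, R'B ≡ RB} D_{RB} [𝐑,R']φ, for all epistemic models M, worlds w, communication patterns 𝐑, R ∈ 𝐑, nonempty B ⊆ A, and formulas φ. -/
namespace Stmt18

/-- An epistemic model. -/
structure EM (A P : Type) where
  W : Type
  sim : A → W → W → Prop
  L : W → Set P

/-- The language of distributed knowledge with communication pattern modalities. -/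
inductive Form (A P : Type) : Type
  | atom : P → Form A P
  | neg : Form A P → Form A P
  | conj : Form A P → Form A P → Form A P
  | dk : Set A → Form A P → Form A P
  | cpat : (CG : Set (A → A → Prop)) → (R : A → A → Prop) → R ∈ CG →
      Form A P → Form A P

/-- The update `M ⊙ 𝐑`. -/
def update {A P : Type} (M : EM A P) (CG : Set (A → A → Prop)) : EM A P where
  W := M.W × {R // R ∈ CG}
  sim a x y := ({b | x.2.1 b a} = {b | y.2.1 b a}) ∧ ∀ b, x.2.1 b a → M.sim b x.1 y.1
  L x := M.L x.1

/-- Satisfaction: `M,w ⊨ [𝐑,R]φ` iff `M ⊙ 𝐑,(w,R) ⊨ φ`. -/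
def Sat {A P : Type} : Form A P → (M : EM A P) → M.W → Prop
  | .atom p, M, w => p ∈ M.L w
  | .neg f, M, w => ¬ Sat f M w
  | .conj f g, M, w => Sat f M w ∧ Sat g M w
  | .dk B f, M, w => ∀ v, (∀ a ∈ B, M.sim a w v) → Sat f M v
  | .cpat CG R h f, M, w => Sat f (update M CG) (w, ⟨R, h⟩)

theorem forall_update_sim_iff {A P : Type} {M : EM A P} {CG : Set (A → A → Prop)}
    {B : Set A} {w v : M.W} {R R' : {R // R ∈ CG}} :
    (∀ a ∈ B, (update M CG).sim a (w, R) (v, R')) ↔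
      (∀ a ∈ B, ∀ b, R'.1 b a ↔ R.1 b a) ∧ ∀ c ∈ {c | ∃ b ∈ B, R.1 c b}, M.sim c w v := by
  simp only [update, Set.ext_iff, Set.mem_ofPred_eq]
  constructor
  · intro h
    exact ⟨fun a ha b => ((h a ha).1 b).symm, fun c ⟨b, hb, hcb⟩ => (h b hb).2 c hcb⟩
  · rintro ⟨hRB, hsim⟩ a ha
    exact ⟨fun b => (hRB a ha b).symm, fun c hca => hsim c ⟨a, ha, hca⟩⟩

theorem reduction_axiom_dk_general (A P : Type) (M : EM A P) (w : M.W) (CG : Set (A → A → Prop))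
    (R : A → A → Prop) (hR : R ∈ CG) (B : Set A) (f : Form A P) :
    Sat (.cpat CG R hR (.dk B f)) M w ↔
      ∀ (R' : A → A → Prop) (h' : R' ∈ CG),
        (∀ a ∈ B, ∀ b, R' b a ↔ R b a) →
        Sat (.dk {c | ∃ b ∈ B, R c b} (.cpat CG R' h' f)) M w := by
  simp only [Sat]
  constructor
  · intro h R' h' hRB v hv
    exact h (v, ⟨R', h'⟩) (forall_update_sim_iff.2 ⟨hRB, hv⟩)
  · rintro h ⟨v, R', h'⟩ hv
    obtain ⟨hRB, hv⟩ := forall_update_sim_iff.1 hv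
    exact h R' h' hRB v hv

/-- The reduction axiom for distributed knowledge under communication pattern
update is valid: `M,w ⊨ [𝐑,R]D_B φ` iff `M,w ⊨ ⋀_{R'∈𝐑, R'B ≡ RB} D_{RB}[𝐑,R']φ`,
where `R'B ≡ RB` means `R'a = Ra` for all `a ∈ B`, and `RB = ⋃_{b∈B} Rb`. -/
theorem reduction_axiom_dk (A P : Type) (M : EM A P)
    (hsim : ∀ a, Equivalence (M.sim a)) (w : M.W)
    (CG : Set (A → A → Prop)) (hrefl : ∀ R ∈ CG, ∀ b, R b b)
    (R : A → A → Prop) (hR : R ∈ CG) (B : Set A) (hB : B.Nonempty)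
    (f : Form A P) :
    Sat (.cpat CG R hR (.dk B f)) M w ↔
      ∀ (R' : A → A → Prop) (h' : R' ∈ CG),
        (∀ a ∈ B, ∀ b, R' b a ↔ R b a) →
        Sat (.dk {c | ∃ b ∈ B, R c b} (.cpat CG R' h' f)) M w :=
  reduction_axiom_dk_general A P M w CG R hR B f

end Stmt18
end

section
/- Sequential execution of two communication patterns is in general not equivalent to a single communication pattern execution, while sequential execution of two action models is always equivalent to a single action model execution: for all action models 𝐔, 𝐔' there exists 𝐔'' with M ⊗ 𝐔 ⊗ 𝐔' isomorphic to M ⊗ 𝐔'' for all M; but there exist 𝐑, 𝐑' (namely 𝐑 = 𝐑' = IS) and a model M (namely Sq) such that no communication pattern 𝐑'' satisfies M ⊙ 𝐑'' collectively bisimilar to M ⊙ 𝐑 ⊙ 𝐑'. -/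
/-
Composing action models pairs their events and conjoins to the first precondition the second one,
evaluated in the first update; the two ways of building the resulting worlds are the same data up
to reassociation.

A communication-pattern update of `Sq` has worlds `(w, R)` with `R` a reflexive graph on two agents,
of which there are only four, so it has at most 16 worlds. The model `Sq ⊙ IS ⊙ IS` has 36 worlds
and is bisimulation minimal: two of its worlds collectively bisimilar to a common world are related
by a relation with the forth property for each single agent, hence agree on every finite
approximation of bisimilarity and are equal. So a surjective bisimulation onto it yields an
injection of its 36 worlds into at most 16.
-/

namespace Stmt19

/-- An epistemic model. -/
structure EM (A P : Type) where
  W : Type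
  sim : A → W → W → Prop
  L : W → Set P

/-- An action model, with (semantic) preconditions: each action determines, for
every model, at which worlds it can be executed. -/
structure AM (A P : Type) where
  E : Type
  rel : A → E → E → Prop
  pre : E → (M : EM A P) → M.W → Prop

/-- Action model execution `M ⊗ 𝐔`: worlds are pairs `(v,e)` with `M,v ⊨ pre(e)`,
relations are pointwise, valuation inherited from `M`. -/
def exec {A P : Type} (M : EM A P) (U : AM A P) : EM A P where
  W := {x : M.W × U.E // U.pre x.2 M x.1}
  sim a x y := M.sim a x.1.1 y.1.1 ∧ U.rel a x.1.2 y.1.2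
  L x := M.L x.1.1

/-- Isomorphism of epistemic models. -/
def Iso {A P : Type} (M N : EM A P) : Prop :=
  ∃ e : M.W ≃ N.W,
    (∀ a x y, M.sim a x y ↔ N.sim a (e x) (e y)) ∧ ∀ x, M.L x = N.L (e x)

/- Part B setup: two agents `false = a`, `true = b`; the square model `Sq` and
the twice-iterated immediate snapshot update. -/

abbrev Agent := Bool
abbrev SqW := Bool × Bool

def sqSim (c : Agent) (w w' : SqW) : Prop :=
  if c then w.2 = w'.2 else w.1 = w'.1

def genRel (CG : Set (Agent → Agent → Prop)) (c : Agent)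
    (x y : SqW × {R // R ∈ CG}) : Prop :=
  ({d | x.2.1 d c} = {d | y.2.1 d c}) ∧ ∀ d, x.2.1 d c → sqSim d x.1 y.1

inductive Pat : Type
  | Rab | Rba | U

def recv : Pat → Agent → Set Agent
  | Pat.Rab, false => {false}
  | Pat.Rab, true => Set.univ
  | Pat.Rba, false => Set.univ
  | Pat.Rba, true => {true}
  | Pat.U, _ => Set.univ

abbrev W1 := SqW × Pat
abbrev W2 := W1 × Pat

def sim1 (c : Agent) (x y : W1) : Prop :=
  recv x.2 c = recv y.2 c ∧ ∀ d ∈ recv x.2 c, sqSim d x.1 y.1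

def sim2 (c : Agent) (x y : W2) : Prop :=
  recv x.2 c = recv y.2 c ∧ ∀ d ∈ recv x.2 c, sim1 d x.1 y.1

/-- Collective bisimilarity (total and surjective bisimulation). -/
def Bisimilar {X Y V : Type} (r1 : Agent → X → X → Prop) (v1 : X → V)
    (r2 : Agent → Y → Y → Prop) (v2 : Y → V) : Prop :=
  ∃ Z : X → Y → Prop,
    (∀ x y, Z x y → v1 x = v2 y) ∧
    (∀ B : Set Agent, B.Nonempty → ∀ x x' y, Z x y →
      (∀ c ∈ B, r1 c x x') → ∃ y', (∀ c ∈ B, r2 c y y') ∧ Z x' y') ∧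
    (∀ B : Set Agent, B.Nonempty → ∀ x y y', Z x y →
      (∀ c ∈ B, r2 c y y') → ∃ x', (∀ c ∈ B, r1 c x x') ∧ Z x' y') ∧
    (∀ x, ∃ y, Z x y) ∧ (∀ y, ∃ x, Z x y)

def AM.comp {A P : Type} (U U' : AM A P) : AM A P where
  E := U.E × U'.E
  rel a e f := U.rel a e.1 f.1 ∧ U'.rel a e.2 f.2
  pre e M w := ∃ h : U.pre e.1 M w, U'.pre e.2 (exec M U) ⟨(w, e.1), h⟩

def execCompEquiv {A P : Type} (M : EM A P) (U U' : AM A P) :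
    (exec (exec M U) U').W ≃ (exec M (U.comp U')).W where
  toFun x := ⟨(x.1.1.1.1, x.1.1.1.2, x.1.2), x.1.1.2, x.2⟩
  invFun y := ⟨(⟨(y.1.1, y.1.2.1), y.2.fst⟩, y.1.2.2), y.2.snd⟩
  left_inv _ := rfl
  right_inv _ := rfl

theorem exec_exec_iso_exec_comp {A P : Type} (M : EM A P) (U U' : AM A P) :
    Iso (exec (exec M U) U') (exec M (U.comp U')) :=
  ⟨execCompEquiv M U U', fun _ _ _ => and_assoc, fun _ => rfl⟩

section BisimApprox

variable {ι X V : Type*} (r : ι → X → X → Prop) (v : X → V)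

def BisimApprox : ℕ → X → X → Prop
  | 0, x, y => v x = v y
  | n + 1, x, y => BisimApprox n x y ∧ ∀ c,
      (∀ x', r c x x' → ∃ y', r c y y' ∧ BisimApprox n x' y') ∧
      (∀ y', r c y y' → ∃ x', r c x x' ∧ BisimApprox n x' y')

instance BisimApprox.decidable [Fintype ι] [Fintype X] [DecidableEq V]
    [∀ c, DecidableRel (r c)] : ∀ n, DecidableRel (BisimApprox r v n)
  | 0 => fun x y => inferInstanceAs (Decidable (v x = v y))
  | n + 1 => fun _ _ =>
    have := BisimApprox.decidable n
    inferInstanceAs (Decidable (_ ∧ ∀ _, _))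

variable {r v}

theorem BisimApprox.of_forth {W : X → X → Prop} (hsymm : ∀ x y, W x y → W y x)
    (hval : ∀ x y, W x y → v x = v y)
    (hforth : ∀ c x y x', W x y → r c x x' → ∃ y', r c y y' ∧ W x' y') :
    ∀ n x y, W x y → BisimApprox r v n x y
  | 0, x, y, h => hval x y h
  | n + 1, x, y, h => ⟨of_forth hsymm hval hforth n x y h, fun c =>
      ⟨fun x' hx' => (hforth c x y x' h hx').imp fun _ ⟨hy', hW⟩ =>
          ⟨hy', of_forth hsymm hval hforth n _ _ hW⟩,
        fun y' hy' => (hforth c y x y' (hsymm _ _ h) hy').imp fun _ ⟨hx', hW⟩ =>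
          ⟨hx', of_forth hsymm hval hforth n _ _ (hsymm _ _ hW)⟩⟩⟩

end BisimApprox

theorem Bisimilar.card_le {X Y V : Type} [Finite X] {r₁ : Agent → X → X → Prop} {v₁ : X → V}
    {r₂ : Agent → Y → Y → Prop} {v₂ : Y → V} (h : Bisimilar r₁ v₁ r₂ v₂)
    (hmin : ∀ y y', (∀ n, BisimApprox r₂ v₂ n y y') → y = y') :
    Nat.card Y ≤ Nat.card X := by
  obtain ⟨Z, hval, hforth, hback, -, hsurj⟩ := h
  have hW : ∀ n y y', (∃ x, Z x y ∧ Z x y') → BisimApprox r₂ v₂ n y y' := by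
    refine BisimApprox.of_forth (fun _ _ ⟨x, hy, hy'⟩ => ⟨x, hy', hy⟩)
      (fun y y' ⟨x, hy, hy'⟩ => (hval x y hy).symm.trans (hval x y' hy')) ?_
    rintro c y y' y₁ ⟨x, hy, hy'⟩ hy₁
    obtain ⟨x₁, hx₁, hZ₁⟩ := hback {c} (Set.singleton_nonempty c) x y y₁ hy
      fun d hd => Set.mem_singleton_iff.1 hd ▸ hy₁
    obtain ⟨y₁', hy₁', hZ₁'⟩ := hforth {c} (Set.singleton_nonempty c) x x₁ y' hy' hx₁
    exact ⟨y₁', hy₁' c rfl, x₁, hZ₁, hZ₁'⟩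
  choose f hf using hsurj
  refine Nat.card_le_card_of_injective f fun y y' hyy' => hmin y y' fun n => hW n y y' ?_
  exact ⟨f y, hf y, hyy' ▸ hf y'⟩

theorem eq_of_reflexive_of_offDiag_eq {R R' : Agent → Agent → Prop} (hR : ∀ d, R d d)
    (hR' : ∀ d, R' d d) (hab : R false true = R' false true) (hba : R true false = R' true false) :
    R = R' := by
  funext d c
  cases d <;> cases c
  · exact propext (iff_of_true (hR false) (hR' false))
  · exact hab
  · exact hba
  · exact propext (iff_of_true (hR true) (hR' true))

theorem card_reflexive_le {CG : Set (Agent → Agent → Prop)} (hrefl : ∀ R ∈ CG, ∀ d, R d d) :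
    Nat.card {R // R ∈ CG} ≤ 4 := by
  have hinj : Function.Injective fun R : {R // R ∈ CG} => (R.1 false true, R.1 true false) :=
    fun R R' h => Subtype.ext <| eq_of_reflexive_of_offDiag_eq (hrefl R R.2) (hrefl R' R'.2)
      (Prod.ext_iff.1 h).1 (Prod.ext_iff.1 h).2
  simpa using Nat.card_le_card_of_injective _ hinj

instance : DecidableEq Pat := fun a b =>
  decidable_of_iff (a.ctorIdx = b.ctorIdx) (by cases a <;> cases b <;> simp [Pat.ctorIdx])

instance : Fintype Pat := ⟨{.Rab, .Rba, .U}, fun x => by cases x <;> decide⟩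

instance (p : Pat) (c d : Agent) : Decidable (d ∈ recv p c) := by
  cases p <;> cases c <;> simp only [recv] <;> infer_instance

instance (p p' : Pat) (c : Agent) : Decidable (recv p c = recv p' c) :=
  decidable_of_iff _ Set.ext_iff.symm

instance (c : Agent) : DecidableRel (sqSim c) := fun _ _ => by unfold sqSim; infer_instance
instance (c : Agent) : DecidableRel (sim1 c) := fun _ _ => by unfold sim1; infer_instance
instance (c : Agent) : DecidableRel (sim2 c) := fun _ _ => by unfold sim2; infer_instance

theorem card_W2 : Nat.card W2 = 36 := by
  rw [Nat.card_eq_fintype_card]; rfl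

-- Four rounds of partition refinement, starting from the `Sq`-world, separate all 36 worlds.
theorem eq_of_bisimApprox_sim2 :
    ∀ y y' : W2, BisimApprox sim2 (fun y => y.1.1) 4 y y' → y = y' := by
  decide +kernel

/-- Sequential execution of two action models is always equivalent to a single
action model execution (composition), but sequential execution of two
communication patterns is in general not: no single communication pattern update
of `Sq` matches `Sq ⊙ IS ⊙ IS`. -/
theorem composition_contrast :
    (∀ (A P : Type) (U U' : AM A P), ∃ U'' : AM A P,
      ∀ M : EM A P, Iso (exec (exec M U) U') (exec M U'')) ∧
    ¬ ∃ CG : Set (Agent → Agent → Prop),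
        (∀ R ∈ CG, ∀ d, R d d) ∧
        Bisimilar (genRel CG) (fun x => x.1) sim2 (fun x => x.1.1) := by
  refine ⟨fun A P U U' => ⟨U.comp U', fun M => exec_exec_iso_exec_comp M U U'⟩, ?_⟩
  rintro ⟨CG, hrefl, hbisim⟩
  have h36 := hbisim.card_le fun y y' h => eq_of_bisimApprox_sim2 y y' (h 4)
  have h16 : Nat.card (SqW × {R // R ∈ CG}) ≤ 4 * 4 := by
    rw [Nat.card_prod]
    exact Nat.mul_le_mul (by simp) (card_reflexive_le hrefl)
  rw [card_W2] at h36
  omega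

end Stmt19
end
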